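/- arXiv:1302.5658 — 5 statements merged into one kernel-verified Lean document; each statement's English description precedes it below -/
import Mathlib

section
/- The σ-ideal M of meager subsets of the Hilbert cube I^ω is a maximal non-trivial topologically invariant ideal with BP-base on I^ω: if I is a non-trivial topologically invariant ideal on I^ω which has a BP-base and contains M, then I = M. -/
open Set Topology Cardinal

/-- The Hilbert cube `[0,1]^ℕ` with the product topology. -/
abbrev HilbertCube : Type := ℕ → ↥(Set.Icc (0:ℝ) 1)

/-- An ideal of subsets: a nonempty family closed under subsets and finite unions. -/
def IsIdeal {X : Type*} (I : Set (Set X)) : Prop :=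
  I.Nonempty ∧ (∀ A ∈ I, ∀ B, B ⊆ A → B ∈ I) ∧ (∀ A ∈ I, ∀ B ∈ I, A ∪ B ∈ I)

/-- A σ-ideal: an ideal closed under countable unions. -/
def IsSigmaIdeal {X : Type*} (I : Set (Set X)) : Prop :=
  IsIdeal I ∧ ∀ A : ℕ → Set X, (∀ n, A n ∈ I) → (⋃ n, A n) ∈ I

/-- A non-trivial ideal contains an uncountable set but not the whole space. -/
def NontrivialIdeal {X : Type*} (I : Set (Set X)) : Prop :=
  (∃ A ∈ I, ¬ A.Countable) ∧ Set.univ ∉ I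

/-- An ideal on a topological space is topologically invariant if it is preserved by
all homeomorphisms of the space. -/
def TopInvariant {X : Type*} [TopologicalSpace X] (I : Set (Set X)) : Prop :=
  ∀ h : X ≃ₜ X, {B | ∃ A ∈ I, B = h '' A} = I

/-- `I` has a base all of whose members satisfy `P`. -/
def HasBaseWith {X : Type*} (I : Set (Set X)) (P : Set X → Prop) : Prop :=
  ∃ B ⊆ I, (∀ A ∈ I, ∃ C ∈ B, A ⊆ C) ∧ ∀ C ∈ B, P C

/-- A set has the Baire property if it differs from some open set by a meager set. -/
def HasBaireProperty {X : Type*} [TopologicalSpace X] (A : Set X) : Prop :=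
  ∃ U : Set X, IsOpen U ∧ IsMeagre ((A \ U) ∪ (U \ A))

/-- The σ-ideal of meager subsets of a topological space. -/
def MeagerIdeal (X : Type*) [TopologicalSpace X] : Set (Set X) := {A | IsMeagre A}

/-- The σ-ideal generated by a family `F`: all subsets of countable unions of members
of `F`. -/
def sigmaGenerated {X : Type*} (F : Set (Set X)) : Set (Set X) :=
  {A | ∃ S : ℕ → Set X, (∀ n, S n ∈ F) ∧ A ⊆ ⋃ n, S n}

/-- A Cantor set in the Hilbert cube: a subset homeomorphic to the Cantor cube. -/
def IsCantorSet (C : Set HilbertCube) : Prop := Nonempty (C ≃ₜ (ℕ → Bool))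

/-- A minimal Cantor set: one that can be mapped into any other Cantor set by an
ambient homeomorphism. -/
def IsMinimalCantorSet (A : Set HilbertCube) : Prop :=
  IsCantorSet A ∧ ∀ B : Set HilbertCube, IsCantorSet B →
    ∃ h : HilbertCube ≃ₜ HilbertCube, h '' A ⊆ B

/-- The family of all minimal Cantor sets in the Hilbert cube. -/
def CantorFamily : Set (Set HilbertCube) := {A | IsMinimalCantorSet A}

/-- The σ-ideal generated by minimal Cantor sets. -/
def sigmaC0 : Set (Set HilbertCube) := sigmaGenerated CantorFamily

/-- A minimal dense Gδ-subset of the Hilbert cube. -/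
def IsMinimalDenseGdelta (A : Set HilbertCube) : Prop :=
  IsGδ A ∧ Dense A ∧ ∀ B : Set HilbertCube, IsGδ B → Dense B →
    ∃ h : HilbertCube ≃ₜ HilbertCube, h '' A ⊆ B

/-- The family of all minimal dense Gδ-sets in the Hilbert cube. -/
def GdeltaFamily : Set (Set HilbertCube) := {A | IsMinimalDenseGdelta A}

/-- The σ-ideal generated by minimal dense Gδ-sets. -/
def sigmaG0 : Set (Set HilbertCube) := sigmaGenerated GdeltaFamily

/-- `cov(I)`: the least cardinality of a subfamily of `I` covering the space. -/
noncomputable def covIdeal {X : Type*} (I : Set (Set X)) : Cardinal :=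
  sInf {c | ∃ A : Set (Set X), A ⊆ I ∧ ⋃₀ A = Set.univ ∧ c = #A}

/-- `non(I)`: the least cardinality of a subset of the space not in `I`. -/
noncomputable def nonIdeal {X : Type*} (I : Set (Set X)) : Cardinal :=
  sInf {c | ∃ A : Set X, A ∉ I ∧ c = #A}

/-- `add(I,J)`: the least cardinality of a subfamily of `I` whose union is not in `J`. -/
noncomputable def addIdeal2 {X : Type*} (I J : Set (Set X)) : Cardinal :=
  sInf {c | ∃ A : Set (Set X), A ⊆ I ∧ ⋃₀ A ∉ J ∧ c = #A}

/-- `add(I) = add(I,I)`. -/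
noncomputable def addIdeal {X : Type*} (I : Set (Set X)) : Cardinal := addIdeal2 I I

/-- `cof(I,J)`: the least cardinality of a subfamily of `J` cofinal in `I`. -/
noncomputable def cofIdeal2 {X : Type*} (I J : Set (Set X)) : Cardinal :=
  sInf {c | ∃ A : Set (Set X), A ⊆ J ∧ (∀ B ∈ I, ∃ C ∈ A, B ⊆ C) ∧ c = #A}

/-- `cof(I) = cof(I,I)`. -/
noncomputable def cofIdeal {X : Type*} (I : Set (Set X)) : Cardinal := cofIdeal2 I I

/-- The compact-open topology on the homeomorphism group of a space, induced by the
compact-open topology of the space of continuous self-maps. -/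
noncomputable instance homeoGroupTopology (X : Type*) [TopologicalSpace X] :
    TopologicalSpace (X ≃ₜ X) :=
  TopologicalSpace.induced (fun h : X ≃ₜ X => (⟨h, h.continuous⟩ : C(X, X)))
    ContinuousMap.compactOpen

/-- A Z-set: a closed set `A` such that for every open cover `U` of the space there is a
continuous map into the complement of `A` which is `U`-near to the identity. -/
def IsZSet {X : Type*} [TopologicalSpace X] (A : Set X) : Prop :=
  IsClosed A ∧ ∀ U : Set (Set X), (∀ V ∈ U, IsOpen V) → ⋃₀ U = Set.univ →
    ∃ f : C(X, X), (∀ x, f x ∉ A) ∧ ∀ x : X, ∃ V ∈ U, x ∈ V ∧ f x ∈ V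

/-- A σZ-set: a countable union of Z-sets. -/
def IsSigmaZSet {X : Type*} [TopologicalSpace X] (A : Set X) : Prop :=
  ∃ Z : ℕ → Set X, (∀ n, IsZSet (Z n)) ∧ A = ⋃ n, Z n

/-- The cube `[0,1]^n`. -/
abbrev FinCube (n : ℕ) : Type := Fin n → ↥(Set.Icc (0:ℝ) 1)

/-- A `Z_n`-set in the Hilbert cube: a closed set `A` such that maps avoiding `A` are
dense in the space `C([0,1]^n, I^ω)` with the compact-open topology. -/
def IsZnSet (n : ℕ) (A : Set HilbertCube) : Prop :=
  IsClosed A ∧ Dense {f : C(FinCube n, HilbertCube) | ∀ x, f x ∉ A}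

/-- A `Z_ω`-set in the Hilbert cube: a closed set which is a `Z_n`-set for all `n`. -/
def IsZomegaSet (A : Set HilbertCube) : Prop :=
  IsClosed A ∧ ∀ n : ℕ, IsZnSet n A

/-- Covering dimension of a space is at most `n`: every finite open cover has a finite
open refinement (still a cover) in which no point belongs to more than `n+1` members. -/
def CovDimLE (Y : Type*) [TopologicalSpace Y] (n : ℕ) : Prop :=
  ∀ U : Set (Set Y), U.Finite → (∀ V ∈ U, IsOpen V) → ⋃₀ U = Set.univ →
    ∃ V : Set (Set Y), V.Finite ∧ (∀ W ∈ V, IsOpen W) ∧ ⋃₀ V = Set.univ ∧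
      (∀ W ∈ V, ∃ W' ∈ U, W ⊆ W') ∧
      ∀ y : Y, {W ∈ V | y ∈ W}.ncard ≤ n + 1

/-- A `G_δ`-generated topologically invariant ideal on the Hilbert cube. -/
def GdeltaGenerated (I : Set (Set HilbertCube)) : Prop :=
  HasBaseWith I IsSigmaCompact ∧
  ∃ G : Set HilbertCube, IsGδ G ∧
    (∀ K : Set HilbertCube, K ⊆ G → IsCompact K → K ∈ I) ∧
    ∀ A ∈ I, IsCompact A →
      Dense {h : HilbertCube ≃ₜ HilbertCube | h '' A ⊆ G}

/-- A `G_δ*`-generated ideal: a preimage of a `G_δ`-generated ideal under an embedding. -/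
def GdeltaStarGenerated (I : Set (Set HilbertCube)) : Prop :=
  ∃ I' : Set (Set HilbertCube), GdeltaGenerated I' ∧
    ∃ e : HilbertCube → HilbertCube, IsEmbedding e ∧ I = {S | ∃ A ∈ I', S = e ⁻¹' A}

/-- A `σG_δ*`-generated ideal. -/
def SigmaGdeltaStarGenerated (I : Set (Set HilbertCube)) : Prop :=
  ∃ In : ℕ → Set (Set HilbertCube), (∀ n, GdeltaStarGenerated (In n)) ∧
    (∀ n, In n ⊆ I) ∧
    ∀ A ∈ I, ∃ K : ℕ → Set HilbertCube,
      (∀ n, IsCompact (K n) ∧ K n ∈ In n) ∧ A ⊆ ⋃ n, K n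


/-!
If a non-meagre `C ∈ I` has the Baire property, it agrees with a nonempty open set `U` up to a
meagre set. Every orbit of the homeomorphism group of `I^ω` is dense, so by compactness finitely
many copies `h⁻¹ U` cover `I^ω`; the corresponding copies of `C` then cover `I^ω` up to a meagre
set, which puts `I^ω` itself into `I`.

The orbits are dense because finitely many coordinates can be prescribed in `(0,1)` one at a time,
each time mixing the coordinate with a fresh one by a homeomorphism of the square `[0,1]²`. The
homeomorphisms of a convex body act transitively on its interior (gauge rescaling about two
interior points) and on its frontier (straighten the body into a round ball and reflect).
-/

open Bornology Metric Pointwise Function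

theorem Convex.exists_homeomorph_image_eq_self_of_mem_interior {E : Type*} [AddCommGroup E]
    [Module ℝ E] [TopologicalSpace E] [IsTopologicalAddGroup E] [ContinuousSMul ℝ E] [T1Space E]
    {K : Set E} (hc : Convex ℝ K) (hK : IsClosed K) (hb : IsVonNBounded ℝ K) {p q : E}
    (hp : p ∈ interior K) (hq : q ∈ interior K) :
    ∃ Φ : E ≃ₜ E, Φ '' K = K ∧ Φ p = q := by
  have hs : -p +ᵥ K ∈ 𝓝 0 := by
    simpa [← mem_interior_iff_mem_nhds, interior_vadd, mem_vadd_set_iff_neg_vadd_mem]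
  have ht : -q +ᵥ K ∈ 𝓝 0 := by
    simpa [← mem_interior_iff_mem_nhds, interior_vadd, mem_vadd_set_iff_neg_vadd_mem]
  set h := gaugeRescaleHomeomorph (-p +ᵥ K) (-q +ᵥ K) (hc.vadd _) hs (hb.vadd _) (hc.vadd _) ht
    (hb.vadd _)
  refine ⟨(Homeomorph.addLeft (-p)).trans (h.trans (Homeomorph.addLeft q)), ?_, ?_⟩
  · calc (fun a ↦ q + h (-p + a)) '' K = q +ᵥ h '' closure (-p +ᵥ K) := by
          simp_rw [closure_vadd, hK.closure_eq, ← image_vadd, image_image, vadd_eq_add]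
      _ = K := by
          rw [image_gaugeRescaleHomeomorph_closure, closure_vadd, hK.closure_eq, vadd_neg_vadd]
  · simp [h, gaugeRescaleHomeomorph, gaugeRescaleEquiv]

theorem Convex.exists_homeomorph_image_eq_self_of_mem_frontier {E : Type*}
    [NormedAddCommGroup E] [InnerProductSpace ℝ E] {K : Set E} (hc : Convex ℝ K)
    (hK : IsClosed K) (hne : (interior K).Nonempty) (hb : IsBounded K) {p q : E}
    (hp : p ∈ frontier K) (hq : q ∈ frontier K) :
    ∃ Φ : E ≃ₜ E, Φ '' K = K ∧ Φ p = q := by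
  obtain ⟨e, -, heK, hefr⟩ :=
    exists_homeomorph_image_interior_closure_frontier_eq_unitBall hc hne hb
  rw [hK.closure_eq] at heK
  have hpq : ‖e p‖ = ‖e q‖ := by
    have hp' : e p ∈ sphere (0 : E) 1 := hefr ▸ mem_image_of_mem e hp
    have hq' : e q ∈ sphere (0 : E) 1 := hefr ▸ mem_image_of_mem e hq
    rw [mem_sphere_zero_iff_norm.mp hp', mem_sphere_zero_iff_norm.mp hq']
  set ρ := Submodule.reflection (ℝ ∙ (e p - e q))ᗮ
  refine ⟨e.trans (ρ.toHomeomorph.trans e.symm), ?_, ?_⟩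
  · change (e.symm ∘ ρ ∘ e) '' K = K
    rw [image_comp, image_comp, heK, LinearIsometryEquiv.image_closedBall, map_zero, ← heK,
      e.image_symm, e.preimage_image]
  · simp [ρ, Submodule.reflection_sub hpq]

def Homeomorph.restrictOfImageEq {X : Type*} [TopologicalSpace X] (Φ : X ≃ₜ X) {K : Set X}
    (h : Φ '' K = K) : K ≃ₜ K :=
  Φ.subtype fun x ↦ by rw [← Φ.injective.mem_set_image, h]

noncomputable def Complex.reProdImHomeomorph (s t : Set ℝ) : s ×ℂ t ≃ₜ s × t :=
  (Complex.equivRealProdCLM.toHomeomorph.subtype fun _ ↦ Iff.rfl).trans (Homeomorph.Set.prod _ _)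

theorem exists_homeomorph_unitSquare_fst_eq (p : Icc (0 : ℝ) 1 × Icc (0 : ℝ) 1) {c : ℝ}
    (hc : c ∈ Ioo 0 1) :
    ∃ β : (Icc (0 : ℝ) 1 × Icc (0 : ℝ) 1) ≃ₜ (Icc (0 : ℝ) 1 × Icc (0 : ℝ) 1),
      ((β p).1 : ℝ) = c := by
  set K := Icc (0 : ℝ) 1 ×ℂ Icc 0 1
  set S := Complex.reProdImHomeomorph (Icc (0 : ℝ) 1) (Icc 0 1)
  set z := S.symm p
  have hKc : Convex ℝ K :=
    ((convex_Icc 0 1).linear_preimage Complex.reLm).inter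
      ((convex_Icc 0 1).linear_preimage Complex.imLm)
  have hK : IsClosed K := isClosed_Icc.reProdIm isClosed_Icc
  have hKb : IsBounded K := (isBounded_Icc 0 1).reProdIm (isBounded_Icc 0 1)
  have hint : (⟨c, 1 / 2⟩ : ℂ) ∈ interior K := by
    rw [Complex.interior_reProdIm, interior_Icc]
    exact ⟨hc, by norm_num, by norm_num⟩
  obtain ⟨Φ, hΦK, hΦz⟩ : ∃ Φ : ℂ ≃ₜ ℂ, Φ '' K = K ∧ (Φ z).re = c := by
    by_cases hz : (z : ℂ) ∈ interior K
    · obtain ⟨Φ, hΦK, hΦz⟩ := hKc.exists_homeomorph_image_eq_self_of_mem_interior hK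
        (NormedSpace.isVonNBounded_of_isBounded ℝ hKb) hz hint
      exact ⟨Φ, hΦK, by rw [hΦz]⟩
    · have hzfr : (z : ℂ) ∈ frontier K := by
        rw [hK.frontier_eq]
        exact ⟨z.2, hz⟩
      have hfr : (⟨c, 0⟩ : ℂ) ∈ frontier K := by
        rw [Complex.frontier_reProdIm, closure_Icc, frontier_Icc zero_le_one]
        exact Or.inl ⟨Ioo_subset_Icc_self hc, Or.inl rfl⟩
      obtain ⟨Φ, hΦK, hΦz⟩ := hKc.exists_homeomorph_image_eq_self_of_mem_frontier hK
        ⟨_, hint⟩ hKb hzfr hfr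
      exact ⟨Φ, hΦK, by rw [hΦz]⟩
  exact ⟨S.symm.trans ((Φ.restrictOfImageEq hΦK).trans S), hΦz⟩

section UpdatePair

variable {ι Y : Type*} [DecidableEq ι] {i j : ι}

def updatePair (i j : ι) (f : Y × Y → Y × Y) (z : ι → Y) : ι → Y :=
  update (update z i (f (z i, z j)).1) j (f (z i, z j)).2

theorem updatePair_apply_left (hij : i ≠ j) (f : Y × Y → Y × Y) (z : ι → Y) :
    updatePair i j f z i = (f (z i, z j)).1 := by
  simp [updatePair, hij]

theorem updatePair_apply_of_ne {k : ι} (hki : k ≠ i) (hkj : k ≠ j) (f : Y × Y → Y × Y)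
    (z : ι → Y) : updatePair i j f z k = z k := by
  simp [updatePair, hki, hkj]

theorem updatePair_updatePair (hij : i ≠ j) (f g : Y × Y → Y × Y) (z : ι → Y) :
    updatePair i j g (updatePair i j f z) = updatePair i j (g ∘ f) z := by
  ext k
  simp only [updatePair, update_apply]
  split_ifs <;> simp_all

theorem updatePair_id (z : ι → Y) : updatePair i j id z = z := by
  simp [updatePair]

variable [TopologicalSpace Y]

theorem continuous_updatePair {f : Y × Y → Y × Y} (hf : Continuous f) :
    Continuous (updatePair i j f) := by
  have hfz : Continuous fun z : ι → Y ↦ f (z i, z j) := by fun_prop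
  exact (continuous_id.update i hfz.fst).update j hfz.snd

def Homeomorph.updatePair (hij : i ≠ j) (β : Y × Y ≃ₜ Y × Y) : (ι → Y) ≃ₜ (ι → Y) where
  toFun := _root_.updatePair i j β
  invFun := _root_.updatePair i j β.symm
  left_inv z := by simp [updatePair_updatePair hij, updatePair_id]
  right_inv z := by simp [updatePair_updatePair hij, updatePair_id]
  continuous_toFun := continuous_updatePair β.continuous
  continuous_invFun := continuous_updatePair β.symm.continuous

end UpdatePair

section DenseOrbits

variable {ι Y : Type*} [Infinite ι] [TopologicalSpace Y] {D : Set Y}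

theorem exists_homeomorph_pi_apply_eq_on
    (hD : ∀ p : Y × Y, ∀ c ∈ D, ∃ β : Y × Y ≃ₜ Y × Y, (β p).1 = c) (x d : ι → Y)
    (F : Finset ι) (hd : ∀ i ∈ F, d i ∈ D) :
    ∃ h : (ι → Y) ≃ₜ (ι → Y), ∀ i ∈ F, h x i = d i := by
  classical
  induction F using Finset.induction_on with
  | empty => exact ⟨Homeomorph.refl _, by simp⟩
  | insert i F hiF ih =>
    obtain ⟨h, hh⟩ := ih fun k hk ↦ hd k (Finset.mem_insert_of_mem hk)
    obtain ⟨j, hj⟩ := Infinite.exists_notMem_finset (insert i F)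
    have hij : i ≠ j := by rintro rfl; exact hj (Finset.mem_insert_self i F)
    obtain ⟨β, hβ⟩ := hD (h x i, h x j) (d i) (hd i (Finset.mem_insert_self i F))
    refine ⟨h.trans (Homeomorph.updatePair hij β), fun k hk ↦ ?_⟩
    rcases Finset.mem_insert.1 hk with rfl | hkF
    · exact (updatePair_apply_left hij β (h x)).trans hβ
    · have hkj : k ≠ j := by rintro rfl; exact hj (Finset.mem_insert_of_mem hkF)
      exact (updatePair_apply_of_ne (ne_of_mem_of_not_mem hkF hiF) hkj β (h x)).trans (hh k hkF)

theorem dense_range_homeomorph_apply_pi (hDd : Dense D)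
    (hD : ∀ p : Y × Y, ∀ c ∈ D, ∃ β : Y × Y ≃ₜ Y × Y, (β p).1 = c) (x : ι → Y) :
    Dense (range fun h : (ι → Y) ≃ₜ (ι → Y) ↦ h x) := by
  refine dense_iff_inter_open.2 fun U hU ⟨u, hu⟩ ↦ ?_
  obtain ⟨F, V, hV, hVU⟩ := isOpen_pi_iff.1 hU u hu
  have hc : ∀ k, ∃ c, k ∈ F → c ∈ V k ∩ D := fun k ↦ by
    by_cases hk : k ∈ F
    · obtain ⟨c, hc⟩ := hDd.inter_open_nonempty (V k) (hV k hk).1 ⟨u k, (hV k hk).2⟩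
      exact ⟨c, fun _ ↦ hc⟩
    · exact ⟨u k, fun h ↦ (hk h).elim⟩
  choose d hd using hc
  obtain ⟨h, hh⟩ := exists_homeomorph_pi_apply_eq_on hD x d F fun k hk ↦ (hd k hk).2
  exact ⟨h x, hVU fun k hk ↦ hh k hk ▸ (hd k hk).1, h, rfl⟩

end DenseOrbits

theorem dense_preimage_coe_Ioo : Dense ((↑) ⁻¹' Ioo (0 : ℝ) 1 : Set (Icc (0 : ℝ) 1)) := by
  rw [Subtype.dense_iff, Subtype.image_preimage_coe, inter_eq_right.2 Ioo_subset_Icc_self,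
    closure_Ioo zero_ne_one]

theorem HilbertCube.dense_range_homeomorph_apply (x : HilbertCube) :
    Dense (range fun h : HilbertCube ≃ₜ HilbertCube ↦ h x) :=
  dense_range_homeomorph_apply_pi dense_preimage_coe_Ioo
    (fun p _ hc ↦ exists_homeomorph_unitSquare_fst_eq p hc |>.imp fun _ h ↦ Subtype.ext h) x

namespace IsIdeal

variable {X : Type*} {I : Set (Set X)}

theorem empty_mem (hI : IsIdeal I) : ∅ ∈ I :=
  hI.1.elim fun A hA ↦ hI.2.1 A hA ∅ (empty_subset A)

theorem biUnion_finset_mem {α : Type*} (hI : IsIdeal I) (s : Finset α) {f : α → Set X}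
    (hf : ∀ a ∈ s, f a ∈ I) : (⋃ a ∈ s, f a) ∈ I := by
  classical
  induction s using Finset.induction_on with
  | empty => simpa using hI.empty_mem
  | insert a s _ ih =>
    rw [Finset.set_biUnion_insert]
    exact hI.2.2 _ (hf a (s.mem_insert_self a)) _ (ih fun b hb ↦ hf b (s.mem_insert_of_mem hb))

end IsIdeal

theorem TopInvariant.preimage_mem {X : Type*} [TopologicalSpace X] {I : Set (Set X)}
    (hinv : TopInvariant I) (h : X ≃ₜ X) {C : Set X} (hC : C ∈ I) : h ⁻¹' C ∈ I := by
  rw [← hinv h.symm]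
  exact ⟨C, hC, (congrFun h.image_symm C).symm⟩

theorem exists_finset_homeomorph_preimage_cover {X : Type*} [TopologicalSpace X] [CompactSpace X]
    (hX : ∀ x : X, Dense (range fun h : X ≃ₜ X ↦ h x)) {U : Set X} (hU : IsOpen U)
    (hne : U.Nonempty) : ∃ s : Finset (X ≃ₜ X), ⋃ h ∈ s, h ⁻¹' U = Set.univ := by
  obtain ⟨s, hs⟩ := isCompact_univ.elim_finite_subcover (fun h : X ≃ₜ X ↦ h ⁻¹' U)
    (fun h ↦ hU.preimage h.continuous) fun x _ ↦ by
      obtain ⟨_, hxU, h, rfl⟩ := (hX x).inter_open_nonempty U hU hne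
      exact mem_iUnion.2 ⟨h, hxU⟩
  exact ⟨s, univ_subset_iff.1 hs⟩

theorem TopInvariant.univ_mem_of_not_isMeagre {X : Type*} [TopologicalSpace X] [CompactSpace X]
    (hX : ∀ x : X, Dense (range fun h : X ≃ₜ X ↦ h x)) {I : Set (Set X)} (hI : IsIdeal I)
    (hinv : TopInvariant I) (hM : MeagerIdeal X ⊆ I) {C : Set X} (hCI : C ∈ I)
    (hCbp : HasBaireProperty C) (hCm : ¬IsMeagre C) : Set.univ ∈ I := by
  obtain ⟨U, hU, hCU⟩ := hCbp
  have hUne : U.Nonempty := by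
    refine nonempty_iff_ne_empty.2 fun hU0 ↦ hCm (hCU.mono ?_)
    simp [hU0]
  obtain ⟨s, hs⟩ := exists_finset_homeomorph_preimage_cover hX hU hUne
  have hE : (⋃ h ∈ s, h ⁻¹' C) ∈ I := hI.biUnion_finset_mem s fun h _ ↦ hinv.preimage_mem h hCI
  have hEc : IsMeagre (⋃ h ∈ s, h ⁻¹' C)ᶜ := by
    refine (isMeagre_biUnion s.countable_toSet fun h _ ↦
      hCU.preimage_of_isOpenMap h.continuous h.isOpenMap).mono fun x hx ↦ ?_
    have hxU : x ∈ ⋃ h ∈ s, h ⁻¹' U := hs ▸ mem_univ x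
    obtain ⟨h, hhs, hhx⟩ := mem_iUnion₂.1 hxU
    exact mem_iUnion₂.2 ⟨h, hhs, Or.inr ⟨hhx, fun hxC ↦ hx (mem_iUnion₂.2 ⟨h, hhs, hxC⟩)⟩⟩
  simpa only [union_compl_self] using hI.2.2 _ hE _ (hM hEc)

theorem TopInvariant.eq_meagerIdeal {X : Type*} [TopologicalSpace X] [CompactSpace X]
    (hX : ∀ x : X, Dense (range fun h : X ≃ₜ X ↦ h x)) {I : Set (Set X)} (hI : IsIdeal I)
    (huniv : Set.univ ∉ I) (hinv : TopInvariant I) (hbp : HasBaseWith I HasBaireProperty)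
    (hM : MeagerIdeal X ⊆ I) : I = MeagerIdeal X := by
  refine Subset.antisymm (fun A hA ↦ ?_) hM
  obtain ⟨B, hBI, hbase, hBbp⟩ := hbp
  obtain ⟨C, hCB, hAC⟩ := hbase A hA
  by_contra hAm
  exact huniv <| hinv.univ_mem_of_not_isMeagre hX hI hM (hBI hCB) (hBbp C hCB)
    fun hCm ↦ hAm (hCm.mono hAC)

/-- The σ-ideal of meager subsets of the Hilbert cube is a maximal non-trivial
topologically invariant ideal with BP-base on `I^ω`. -/
theorem meager_ideal_maximal (I : Set (Set HilbertCube))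
    (hI : IsIdeal I) (hnt : NontrivialIdeal I) (hinv : TopInvariant I)
    (hbp : HasBaseWith I HasBaireProperty)
    (hM : MeagerIdeal HilbertCube ⊆ I) :
    I = MeagerIdeal HilbertCube :=
  hinv.eq_meagerIdeal HilbertCube.dense_range_homeomorph_apply hI hnt.2 hbp hM
end

section
/- The σ-ideal M of meager subsets of the Hilbert cube I^ω is the largest non-trivial topologically invariant ideal with σ-compact base on I^ω: every non-trivial topologically invariant ideal on I^ω that has a base consisting of σ-compact sets is contained in M. -/
open Set Topology Cardinal

/-!
A member of the ideal that is not meagre lies in a σ-compact member of the ideal, one of whose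
compact pieces is then a closed non-meagre set, hence has nonempty interior. Every orbit of the
homeomorphism group of the Hilbert cube is dense: finitely many coordinates can be moved into
prescribed open sets one at a time, a value on the boundary of `[0,1]` being brought inside by
rotating the square formed with a spare coordinate. By compactness, finitely many homeomorphic
copies of that interior cover the cube, so topological invariance puts the whole cube in the ideal.
-/

open Function

def HasDenseHomeomorphOrbits (X : Type*) [TopologicalSpace X] : Prop :=
  ∀ x : X, Dense (range fun h : X ≃ₜ X => h x)

section Ideal

variable {X : Type*} {I : Set (Set X)}

lemma IsIdeal.empty_mem_s1 (hI : IsIdeal I) : ∅ ∈ I :=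
  let ⟨A, hA⟩ := hI.1
  hI.2.1 A hA ∅ (empty_subset A)

lemma IsIdeal.biUnion_finset_mem_s1 (hI : IsIdeal I) {α : Type*} (s : Finset α) {S : α → Set X}
    (hS : ∀ a ∈ s, S a ∈ I) : (⋃ a ∈ s, S a) ∈ I := by
  classical
  induction s using Finset.induction_on with
  | empty => simpa using hI.empty_mem_s1
  | insert a s _ ih =>
    rw [Finset.set_biUnion_insert]
    exact hI.2.2 _ (hS a (Finset.mem_insert_self a s)) _
      (ih fun b hb => hS b (Finset.mem_insert_of_mem hb))

variable [TopologicalSpace X]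

lemma TopInvariant.image_mem (hinv : TopInvariant I) (h : X ≃ₜ X) {A : Set X} (hA : A ∈ I) :
    h '' A ∈ I := by
  rw [← hinv h]
  exact ⟨A, hA, rfl⟩

lemma TopInvariant.univ_mem_of_interior_nonempty [CompactSpace X]
    (hX : HasDenseHomeomorphOrbits X) (hI : IsIdeal I) (hinv : TopInvariant I) {K : Set X}
    (hK : K ∈ I) (hint : (interior K).Nonempty) : Set.univ ∈ I := by
  have hmove : ∀ x : X, ∃ g : X ≃ₜ X, g x ∈ interior K := fun x => by
    obtain ⟨_, ⟨g, rfl⟩, hg⟩ := (hX x).exists_mem_open isOpen_interior hint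
    exact ⟨g, hg⟩
  choose g hg using hmove
  obtain ⟨F, hF⟩ := isCompact_univ.elim_finite_subcover (fun x => g x ⁻¹' interior K)
    (fun x => isOpen_interior.preimage (g x).continuous) (fun x _ => mem_iUnion.2 ⟨x, hg x⟩)
  refine hI.2.1 _ (hI.biUnion_finset_mem_s1 F fun x _ => hinv.image_mem (g x).symm hK) _
    (hF.trans (iUnion₂_mono fun x _ => ?_))
  rw [Homeomorph.image_symm]
  exact preimage_mono interior_subset

theorem TopInvariant.subset_meagerIdeal [CompactSpace X] [T2Space X]
    (hX : HasDenseHomeomorphOrbits X) (hI : IsIdeal I) (huniv : Set.univ ∉ I)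
    (hinv : TopInvariant I) (hb : HasBaseWith I IsSigmaCompact) : I ⊆ MeagerIdeal X := by
  intro A hA
  obtain ⟨B, hBI, hcofinal, hσ⟩ := hb
  obtain ⟨C, hCB, hAC⟩ := hcofinal A hA
  obtain ⟨K, hK, rfl⟩ := hσ C hCB
  have hKmeagre : ∀ n, IsMeagre (K n) := fun n => by
    have hKn : K n ∈ I := hI.2.1 _ (hBI hCB) _ (subset_iUnion K n)
    have hint : interior (K n) = ∅ := not_nonempty_iff_eq_empty.1 fun hne =>
      huniv (hinv.univ_mem_of_interior_nonempty hX hI hKn hne)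
    exact ((hK n).isClosed.isNowhereDense_iff.2 hint).isMeagre
  exact (isMeagre_iUnion hKmeagre).mono hAC

end Ideal

section NormRescale

variable {E : Type*} [NormedAddCommGroup E] [NormedSpace ℝ E]

noncomputable def normRescale (L : E ≃L[ℝ] E) (p : E) : E := (‖p‖ / ‖L p‖) • L p

variable (L : E ≃L[ℝ] E)

lemma norm_normRescale (p : E) : ‖normRescale L p‖ = ‖p‖ := by
  rcases eq_or_ne p 0 with rfl | hp
  · simp [normRescale]
  · have hLp : ‖L p‖ ≠ 0 := norm_ne_zero_iff.2 (L.map_ne_zero_iff.2 hp)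
    rw [normRescale, norm_smul, Real.norm_of_nonneg (by positivity), div_mul_cancel₀ _ hLp]

lemma normRescale_smul {c : ℝ} (hc : 0 ≤ c) (p : E) :
    normRescale L (c • p) = c • normRescale L p := by
  rcases hc.eq_or_lt with rfl | hc
  · simp [normRescale]
  · simp only [normRescale, map_smul, norm_smul, Real.norm_of_nonneg hc.le, smul_smul]
    rw [mul_div_mul_left _ _ hc.ne', mul_comm c]

lemma normRescale_symm_normRescale (p : E) : normRescale L.symm (normRescale L p) = p := by
  rcases eq_or_ne p 0 with rfl | hp
  · simp [normRescale]
  · have hLp : ‖L p‖ ≠ 0 := norm_ne_zero_iff.2 (L.map_ne_zero_iff.2 hp)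
    have hpos : 0 ≤ ‖p‖ / ‖L p‖ := by positivity
    rw [show normRescale L p = (‖p‖ / ‖L p‖) • L p from rfl, normRescale_smul _ hpos,
      normRescale, L.symm_apply_apply, smul_smul, div_mul_div_cancel₀ hLp,
      div_self (norm_ne_zero_iff.2 hp), one_smul]

lemma continuous_normRescale : Continuous (normRescale L) := by
  refine continuous_iff_continuousAt.2 fun p => ?_
  rcases eq_or_ne p 0 with rfl | hp
  · have h0 : normRescale L 0 = 0 := by simp [normRescale]
    rw [ContinuousAt, h0, tendsto_zero_iff_norm_tendsto_zero]
    simp only [norm_normRescale]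
    exact continuous_norm.tendsto' 0 0 norm_zero
  · exact ((continuous_norm.continuousAt.div (L.continuous.norm.continuousAt)
      (norm_ne_zero_iff.2 (L.map_ne_zero_iff.2 hp))).smul L.continuous.continuousAt)

noncomputable def normRescaleHomeomorph : E ≃ₜ E where
  toFun := normRescale L
  invFun := normRescale L.symm
  left_inv := normRescale_symm_normRescale L
  right_inv p := by simpa using normRescale_symm_normRescale L.symm p
  continuous_toFun := continuous_normRescale L
  continuous_invFun := continuous_normRescale L.symm

end NormRescale

section Sphere

variable {E : Type*} [NormedAddCommGroup E] [NormedSpace ℝ E] [SeparatingDual ℝ E]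

lemma exists_homeomorph_norm_eq_apply_eq {p q : E} (h : ‖p‖ = ‖q‖) :
    ∃ g : E ≃ₜ E, (∀ x, ‖g x‖ = ‖x‖) ∧ g p = q := by
  rcases eq_or_ne p 0 with rfl | hp
  · exact ⟨.refl E, fun _ => rfl, (norm_eq_zero.1 (h.symm.trans norm_zero)).symm⟩
  have hq : q ≠ 0 := norm_ne_zero_iff.1 (h ▸ norm_ne_zero_iff.2 hp)
  obtain ⟨L, hL⟩ := SeparatingDual.exists_continuousLinearEquiv_apply_eq (R := ℝ) hp hq
  refine ⟨normRescaleHomeomorph L, norm_normRescale L, ?_⟩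
  change (‖p‖ / ‖L p‖) • L p = q
  rw [hL, h, div_self (norm_ne_zero_iff.2 hq), one_smul]

lemma exists_homeomorph_closedBall_apply_eq {c : E} {r : ℝ} {p q : Metric.closedBall c r}
    (h : dist (p : E) c = dist (q : E) c) :
    ∃ g : Metric.closedBall c r ≃ₜ Metric.closedBall c r, g p = q := by
  rw [dist_eq_norm, dist_eq_norm] at h
  obtain ⟨g, hg, hgp⟩ := exists_homeomorph_norm_eq_apply_eq h
  let g' : E ≃ₜ E := (Homeomorph.subRight c).trans (g.trans (Homeomorph.addRight c))
  have hg' : ∀ x, dist (g' x) c = dist x c := fun x => by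
    simp [g', dist_eq_norm, hg]
  refine ⟨g'.subtype fun x => by simp only [Metric.mem_closedBall, hg'], Subtype.ext ?_⟩
  simp [g', hgp]

end Sphere

namespace unitInterval

noncomputable def rpowHomeomorph {γ : ℝ} (hγ : 0 < γ) : unitInterval ≃ₜ unitInterval where
  toFun a := ⟨(a : ℝ) ^ γ, Real.rpow_nonneg a.2.1 γ, Real.rpow_le_one a.2.1 a.2.2 hγ.le⟩
  invFun a := ⟨(a : ℝ) ^ γ⁻¹, Real.rpow_nonneg a.2.1 γ⁻¹,
    Real.rpow_le_one a.2.1 a.2.2 (inv_nonneg.2 hγ.le)⟩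
  left_inv a := Subtype.ext <| by
    simp only [← Real.rpow_mul a.2.1, mul_inv_cancel₀ hγ.ne', Real.rpow_one]
  right_inv a := Subtype.ext <| by
    simp only [← Real.rpow_mul a.2.1, inv_mul_cancel₀ hγ.ne', Real.rpow_one]
  continuous_toFun := ((Real.continuous_rpow_const hγ.le).comp continuous_subtype_val).subtype_mk _
  continuous_invFun :=
    ((Real.continuous_rpow_const (inv_nonneg.2 hγ.le)).comp continuous_subtype_val).subtype_mk _

lemma exists_homeomorph_apply_eq {s t : unitInterval} (hs : (s : ℝ) ∈ Ioo 0 1)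
    (ht : (t : ℝ) ∈ Ioo 0 1) : ∃ g : unitInterval ≃ₜ unitInterval, g s = t := by
  have hlogs : Real.log s < 0 := Real.log_neg hs.1 hs.2
  have hlogt : Real.log t < 0 := Real.log_neg ht.1 ht.2
  refine ⟨rpowHomeomorph (div_pos_of_neg_of_neg hlogt hlogs), Subtype.ext ?_⟩
  change (s : ℝ) ^ (Real.log t / Real.log s) = t
  rw [Real.rpow_def_of_pos hs.1, mul_div_cancel₀ _ hlogs.ne, Real.exp_log ht.1]

lemma dense_preimage_Ioo : Dense (((↑) : unitInterval → ℝ) ⁻¹' Ioo 0 1) := by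
  rw [Subtype.dense_iff, image_preimage_eq_inter_range, Subtype.range_coe,
    inter_eq_left.2 Ioo_subset_Icc_self, closure_Ioo zero_ne_one]

noncomputable def squareHomeomorphClosedBall :
    (unitInterval × unitInterval) ≃ₜ Metric.closedBall ((2⁻¹, 2⁻¹) : ℝ × ℝ) 2⁻¹ :=
  (Homeomorph.Set.prod _ _).symm.trans <| Homeomorph.setCongr <| by
    rw [← closedBall_prod_same, Real.closedBall_eq_Icc]
    norm_num

lemma abs_sub_half_le (x : unitInterval) : |(x : ℝ) - 2⁻¹| ≤ 2⁻¹ :=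
  abs_sub_le_iff.2 ⟨by linarith [x.2.2], by linarith [x.2.1]⟩

lemma abs_sub_half_of_eq_zero_or_one {x : ℝ} (hx : x = 0 ∨ x = 1) : |x - 2⁻¹| = 2⁻¹ := by
  rcases hx with rfl | rfl <;> norm_num

lemma dist_squareHomeomorphClosedBall_eq_half {p : unitInterval × unitInterval}
    (hp : ((p.1 : ℝ) = 0 ∨ (p.1 : ℝ) = 1) ∨ ((p.2 : ℝ) = 0 ∨ (p.2 : ℝ) = 1)) :
    dist (squareHomeomorphClosedBall p : ℝ × ℝ) (2⁻¹, 2⁻¹) = 2⁻¹ := by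
  change max |(p.1 : ℝ) - 2⁻¹| |(p.2 : ℝ) - 2⁻¹| = 2⁻¹
  rcases hp with hp | hp
  · rw [abs_sub_half_of_eq_zero_or_one hp, max_eq_left (abs_sub_half_le _)]
  · rw [abs_sub_half_of_eq_zero_or_one hp, max_eq_right (abs_sub_half_le _)]

/-- Interior values are moved by a power map, boundary values by a rotation of the square seen
as a ball for the sup norm. -/
lemma exists_homeomorph_prod_fst_mem (p : unitInterval × unitInterval) {U : Set unitInterval}
    (hU : IsOpen U) (hne : U.Nonempty) :
    ∃ e : (unitInterval × unitInterval) ≃ₜ (unitInterval × unitInterval), (e p).1 ∈ U := by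
  obtain ⟨c, hcU, hc⟩ := dense_preimage_Ioo.inter_open_nonempty U hU hne
  by_cases hp : (p.1 : ℝ) = 0 ∨ (p.1 : ℝ) = 1
  · set φ := squareHomeomorphClosedBall
    obtain ⟨g, hg⟩ := exists_homeomorph_closedBall_apply_eq (p := φ p) (q := φ (c, 0))
      (by rw [dist_squareHomeomorphClosedBall_eq_half (.inl hp),
        dist_squareHomeomorphClosedBall_eq_half (.inr (.inl rfl))])
    refine ⟨φ.trans (g.trans φ.symm), ?_⟩
    simpa [hg] using hcU
  · rw [not_or] at hp
    obtain ⟨g, hg⟩ := exists_homeomorph_apply_eq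
      ⟨lt_of_le_of_ne p.1.2.1 (Ne.symm hp.1), lt_of_le_of_ne p.1.2.2 hp.2⟩ hc
    exact ⟨g.prodCongr (.refl _), by simpa [hg] using hcU⟩

end unitInterval

section PairMap

variable {ι Y : Type*} [DecidableEq ι] (i j : ι)

def pairMap (f : Y × Y → Y × Y) (x : ι → Y) : ι → Y := fun k =>
  if k = i then (f (x i, x j)).1 else if k = j then (f (x i, x j)).2 else x k

variable {i j}

lemma pairMap_apply_left (f : Y × Y → Y × Y) (x : ι → Y) :
    pairMap i j f x i = (f (x i, x j)).1 := if_pos rfl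

lemma pairMap_apply_right (hij : i ≠ j) (f : Y × Y → Y × Y) (x : ι → Y) :
    pairMap i j f x j = (f (x i, x j)).2 := by
  simp [pairMap, hij.symm]

lemma pairMap_apply_of_ne {k : ι} (hki : k ≠ i) (hkj : k ≠ j) (f : Y × Y → Y × Y)
    (x : ι → Y) : pairMap i j f x k = x k := by
  simp [pairMap, hki, hkj]

lemma pairMap_pairMap (hij : i ≠ j) (f g : Y × Y → Y × Y) (x : ι → Y) :
    pairMap i j f (pairMap i j g x) = pairMap i j (f ∘ g) x := by
  have hpair : (pairMap i j g x i, pairMap i j g x j) = g (x i, x j) := by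
    rw [pairMap_apply_left, pairMap_apply_right hij]
  funext k
  by_cases hki : k = i
  · rw [hki, pairMap_apply_left, hpair, pairMap_apply_left, comp_apply]
  by_cases hkj : k = j
  · rw [hkj, pairMap_apply_right hij, hpair, pairMap_apply_right hij, comp_apply]
  rw [pairMap_apply_of_ne hki hkj, pairMap_apply_of_ne hki hkj, pairMap_apply_of_ne hki hkj]

lemma pairMap_id (x : ι → Y) : pairMap i j id x = x := by
  funext k
  unfold pairMap
  split_ifs with hi hj
  · rw [hi]; rfl
  · rw [hj]; rfl
  · rfl

lemma continuous_pairMap [TopologicalSpace Y] {f : Y × Y → Y × Y} (hf : Continuous f) :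
    Continuous (pairMap i j f) := by
  have hpair : Continuous fun x : ι → Y => f (x i, x j) := by fun_prop
  refine continuous_pi fun k => ?_
  unfold pairMap
  split_ifs
  exacts [continuous_fst.comp hpair, continuous_snd.comp hpair, continuous_apply k]

def Homeomorph.pairMap [TopologicalSpace Y] (hij : i ≠ j) (e : (Y × Y) ≃ₜ (Y × Y)) :
    (ι → Y) ≃ₜ (ι → Y) where
  toFun := _root_.pairMap i j e
  invFun := _root_.pairMap i j e.symm
  left_inv x := by rw [pairMap_pairMap hij, e.symm_comp_self, pairMap_id]
  right_inv x := by rw [pairMap_pairMap hij, e.self_comp_symm, pairMap_id]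
  continuous_toFun := continuous_pairMap e.continuous
  continuous_invFun := continuous_pairMap e.symm.continuous

end PairMap

section Pi

variable {ι Y : Type*} [TopologicalSpace Y]

lemma exists_homeomorph_pi_mem [Infinite ι]
    (hY : ∀ (p : Y × Y) (U : Set Y), IsOpen U → U.Nonempty →
      ∃ e : (Y × Y) ≃ₜ (Y × Y), (e p).1 ∈ U)
    (x : ι → Y) (s : Finset ι) (u : ι → Set Y) (hu : ∀ i ∈ s, IsOpen (u i) ∧ (u i).Nonempty) :
    ∃ g : (ι → Y) ≃ₜ (ι → Y), ∀ i ∈ s, g x i ∈ u i := by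
  classical
  induction s using Finset.induction_on with
  | empty => exact ⟨.refl _, by simp⟩
  | insert i s hi ih =>
    obtain ⟨g, hg⟩ := ih fun k hk => hu k (Finset.mem_insert_of_mem hk)
    obtain ⟨j, hj⟩ := Infinite.exists_notMem_finset (insert i s)
    have hij : i ≠ j := fun h => hj (h ▸ Finset.mem_insert_self i s)
    obtain ⟨e, he⟩ := hY (g x i, g x j) (u i) (hu i (Finset.mem_insert_self i s)).1
      (hu i (Finset.mem_insert_self i s)).2
    refine ⟨g.trans (Homeomorph.pairMap hij e), fun k hk => ?_⟩
    change pairMap i j e (g x) k ∈ u k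
    rcases Finset.mem_insert.1 hk with rfl | hk
    · rwa [pairMap_apply_left]
    · rw [pairMap_apply_of_ne (ne_of_mem_of_not_mem hk hi)
        (ne_of_mem_of_not_mem (Finset.mem_insert_of_mem hk) hj)]
      exact hg k hk

lemma hasDenseHomeomorphOrbits_pi [Infinite ι]
    (hY : ∀ (p : Y × Y) (U : Set Y), IsOpen U → U.Nonempty →
      ∃ e : (Y × Y) ≃ₜ (Y × Y), (e p).1 ∈ U) :
    HasDenseHomeomorphOrbits (ι → Y) := by
  refine fun x => dense_iff_inter_open.2 fun W hW ⟨y, hyW⟩ => ?_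
  obtain ⟨s, u, hu, hsub⟩ := isOpen_pi_iff.1 hW y hyW
  obtain ⟨g, hg⟩ := exists_homeomorph_pi_mem hY x s u
    fun i hi => ⟨(hu i hi).1, y i, (hu i hi).2⟩
  exact ⟨g x, hsub hg, g, rfl⟩

end Pi

/-- The σ-ideal of meager subsets of the Hilbert cube is the largest non-trivial
topologically invariant ideal with σ-compact base on `I^ω`. -/
theorem meager_ideal_largest_sigma_compact (I : Set (Set HilbertCube))
    (hI : IsIdeal I) (hnt : NontrivialIdeal I) (hinv : TopInvariant I)
    (hb : HasBaseWith I IsSigmaCompact) :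
    I ⊆ MeagerIdeal HilbertCube :=
  hinv.subset_meagerIdeal
    (hasDenseHomeomorphOrbits_pi unitInterval.exists_homeomorph_prod_fst_mem) hI hnt.2 hb
end

section
/- Every minimal Cantor set in the Hilbert cube I^ω belongs to every non-trivial topologically invariant ideal with analytic base on I^ω; consequently, if I is a non-trivial topologically invariant σ-ideal with analytic base on I^ω, then σC₀ ⊆ I. -/
open Set Topology Cardinal

/-! An uncountable analytic set `range f`, with `f` continuous on a Polish space `β`, contains
a Cantor set. In `β` one builds a Cantor scheme of open pieces whose `f`-images stay uncountable:
each piece is split around two condensation points with distinct `f`-values, whose images are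
separated by neighbourhoods with disjoint closures. Completeness of `β` provides the limits along
the branches, and the separation makes `f` injective on them.

So every non-trivial ideal with analytic base contains a Cantor set `B`; a minimal Cantor set is
moved into `B` by a homeomorphism of the cube, hence lies in the ideal by topological invariance. -/

open Function Filter MeasureTheory CantorScheme PiNat
open scoped ENNReal

section Condensation

variable {β X : Type*} [TopologicalSpace β]

def IsImageCondensationPt (f : β → X) (s : Set β) (x : β) : Prop :=
  ∀ W ∈ 𝓝 x, ¬(f '' (s ∩ W)).Countable

variable [SecondCountableTopology β] {f : β → X}

theorem countable_image_diff_setOf_isImageCondensationPt (s : Set β) :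
    (f '' (s \ {x | IsImageCondensationPt f s x})).Countable := by
  have hloc : ∀ x ∈ s \ {x | IsImageCondensationPt f s x},
      ∃ W ∈ 𝓝 x, (f '' (s ∩ W)).Countable := by
    intro x hx
    simpa [IsImageCondensationPt] using hx.2
  choose! W hWx hWc using hloc
  obtain ⟨t, hts, htc, hcover⟩ := TopologicalSpace.countable_cover_nhdsWithin
    fun x hx => mem_nhdsWithin_of_mem_nhds (hWx x hx)
  refine (htc.biUnion fun x hx => hWc x (hts hx)).mono ?_
  rintro _ ⟨y, hy, rfl⟩
  obtain ⟨x, hxt, hyx⟩ := mem_iUnion₂.1 (hcover hy)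
  exact mem_biUnion hxt ⟨y, ⟨hy.1, hyx⟩, rfl⟩

theorem exists_isImageCondensationPt_pair {s : Set β} (hs : ¬(f '' s).Countable) :
    ∃ x₀ ∈ s, ∃ x₁ ∈ s, f x₀ ≠ f x₁ ∧
      IsImageCondensationPt f s x₀ ∧ IsImageCondensationPt f s x₁ := by
  set K := s ∩ {x | IsImageCondensationPt f s x}
  have hK : ¬(f '' K).Countable := fun hK => hs <| by
    rw [← inter_union_sdiff s {x | IsImageCondensationPt f s x}, image_union]
    exact hK.union (countable_image_diff_setOf_isImageCondensationPt s)
  obtain ⟨_, ⟨x₀, hx₀, rfl⟩, _, ⟨x₁, hx₁, rfl⟩, hne⟩ :=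
    not_subsingleton_iff.1 fun h : (f '' K).Subsingleton => hK h.countable
  exact ⟨x₀, hx₀.1, x₁, hx₁.1, hne, hx₀.2, hx₁.2⟩

end Condensation

theorem exists_isOpen_mem_closure_subset_ediam_le {β : Type*} [PseudoEMetricSpace β]
    {U : Set β} {x : β} (hU : U ∈ 𝓝 x) {ε : ℝ≥0∞} (hε : 0 < ε) :
    ∃ W, IsOpen W ∧ x ∈ W ∧ closure W ⊆ U ∧ Metric.ediam W ≤ ε := by
  obtain ⟨C, hCx, hC, hCU⟩ := exists_mem_nhds_isClosed_subset hU
  refine ⟨interior C ∩ Metric.eball x (ε / 2), isOpen_interior.inter Metric.isOpen_eball,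
    ⟨mem_interior_iff_mem_nhds.2 hCx, Metric.mem_eball_self (ENNReal.half_pos hε.ne')⟩,
    ?_, ?_⟩
  · exact (closure_minimal (inter_subset_left.trans interior_subset) hC).trans hCU
  · calc Metric.ediam (interior C ∩ Metric.eball x (ε / 2))
        ≤ Metric.ediam (Metric.eball x (ε / 2)) := Metric.ediam_mono inter_subset_right
      _ ≤ 2 * (ε / 2) := Metric.ediam_eball_le
      _ = ε := ENNReal.mul_div_cancel two_ne_zero ENNReal.ofNat_ne_top

theorem exists_split_of_not_countable_image {β X : Type*} [PseudoEMetricSpace β]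
    [SecondCountableTopology β] [TopologicalSpace X] [T25Space X] {f : β → X}
    (hf : Continuous f) {U : Set β} (hU : IsOpen U) (hfU : ¬(f '' U).Countable)
    {ε : ℝ≥0∞} (hε : 0 < ε) :
    ∃ V : Bool → Set β, (∀ i, IsOpen (V i) ∧ ¬(f '' V i).Countable ∧
        closure (V i) ⊆ U ∧ Metric.ediam (V i) ≤ ε) ∧
      Disjoint (f '' V false) (f '' V true) := by
  have piece : ∀ x ∈ U, IsImageCondensationPt f U x → ∀ O, IsOpen O → f x ∈ O →
      ∃ W, (IsOpen W ∧ ¬(f '' W).Countable ∧ closure W ⊆ U ∧ Metric.ediam W ≤ ε) ∧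
        f '' W ⊆ O := by
    intro x hx hcx O hO hfx
    obtain ⟨W, hW, hxW, hWU, hWε⟩ := exists_isOpen_mem_closure_subset_ediam_le
      (hU.mem_nhds hx) hε
    have hnhds : W ∩ f ⁻¹' O ∈ 𝓝 x :=
      inter_mem (hW.mem_nhds hxW) (hf.continuousAt.preimage_mem_nhds (hO.mem_nhds hfx))
    refine ⟨W ∩ f ⁻¹' O, ⟨hW.inter (hO.preimage hf), fun hc => hcx _ hnhds ?_,
      (closure_mono inter_subset_left).trans hWU,
      (Metric.ediam_mono inter_subset_left).trans hWε⟩,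
      (image_mono inter_subset_right).trans (image_preimage_subset f O)⟩
    exact hc.mono (image_mono inter_subset_right)
  obtain ⟨x₀, hx₀, x₁, hx₁, hne, hc₀, hc₁⟩ := exists_isImageCondensationPt_pair hfU
  obtain ⟨O₀, hfx₀, hO₀, O₁, hfx₁, hO₁, hdisj⟩ := exists_open_nhds_disjoint_closure hne
  obtain ⟨W₀, hW₀, hfW₀⟩ := piece x₀ hx₀ hc₀ O₀ hO₀ hfx₀
  obtain ⟨W₁, hW₁, hfW₁⟩ := piece x₁ hx₁ hc₁ O₁ hO₁ hfx₁
  refine ⟨fun i => cond i W₁ W₀, fun i => ?_, ?_⟩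
  · cases i
    exacts [hW₀, hW₁]
  · exact (hdisj.mono subset_closure subset_closure).mono hfW₀ hfW₁

theorem CantorScheme.injective_comp_inducedMap {β α γ : Type*} {A : List β → Set α}
    (g : α → γ) (hA : ∀ l, Pairwise fun a b => Disjoint (g '' A (a :: l)) (g '' A (b :: l))) :
    Injective (g ∘ (inducedMap A).2) := by
  intro x y hxy
  ext1
  apply res_injective
  ext n : 1
  induction n with
  | zero => simp
  | succ n ih =>
    rw [res_succ, res_succ, ih]
    congr 1
    by_contra hne
    refine (hA (res y n) hne).ne_of_mem ?_ ?_ hxy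
    · rw [← ih, ← res_succ]
      exact mem_image_of_mem g (map_mem x _)
    · rw [← res_succ]
      exact mem_image_of_mem g (map_mem y _)

theorem exists_continuous_injective_comp_of_not_countable_range {β X : Type*} [MetricSpace β]
    [CompleteSpace β] [SecondCountableTopology β] [TopologicalSpace X] [T25Space X]
    {f : β → X} (hf : Continuous f) (hrange : ¬(range f).Countable) :
    ∃ φ : (ℕ → Bool) → β, Continuous φ ∧ Injective (f ∘ φ) := by
  let P := {U : Set β // IsOpen U ∧ ¬(f '' U).Countable}
  choose V hV hdisj using fun (U : P) (n : ℕ) => exists_split_of_not_countable_image hf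
    U.2.1 U.2.2 (ENNReal.inv_pos.2 (ENNReal.natCast_ne_top n))
  let D : List Bool → P := fun l => l.rec ⟨univ, isOpen_univ, by rwa [image_univ]⟩
    fun a l U => ⟨V U (l.length + 1) a, (hV U _ a).1, (hV U _ a).2.1⟩
  let A : List Bool → Set β := fun l => (D l).1
  have hanti : ClosureAntitone A := fun l a => (hV (D l) _ a).2.2.1
  have hediam : ∀ l, Metric.ediam (A l) ≤ (l.length : ℝ≥0∞)⁻¹ := by
    rintro (_ | ⟨a, l⟩)
    · simp -- the root is unconstrained: `(0 : ℝ≥0∞)⁻¹ = ⊤`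
    · exact (hV (D l) _ a).2.2.2
  have hvanish : VanishingDiam A := fun x =>
    tendsto_of_tendsto_of_tendsto_of_le_of_le tendsto_const_nhds
      ENNReal.tendsto_inv_nat_nhds_zero (fun _ => zero_le)
      fun n => by simpa only [res_length] using hediam (res x n)
  have hne : ∀ l, (A l).Nonempty := fun l =>
    nonempty_iff_ne_empty.2 fun h => (D l).2.2 (by simp [A, h])
  have hdom := hanti.map_of_vanishingDiam hvanish hne
  have hsplit : ∀ l, Pairwise fun a b => Disjoint (f '' A (a :: l)) (f '' A (b :: l)) := by
    rintro l (_ | _) (_ | _) hab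
    exacts [absurd rfl hab, hdisj (D l) _, (hdisj (D l) _).symm, absurd rfl hab]
  refine ⟨fun x => (inducedMap A).2 ⟨x, hdom ▸ mem_univ x⟩,
    hvanish.map_continuous.comp (continuous_id.subtype_mk _), fun x y hxy => ?_⟩
  simpa using injective_comp_inducedMap f hsplit hxy

theorem MeasureTheory.AnalyticSet.exists_nat_bool_injection_of_not_countable {X : Type*}
    [TopologicalSpace X] [T25Space X] {s : Set X} (hs : AnalyticSet s) (hunc : ¬s.Countable) :
    ∃ F : (ℕ → Bool) → X, range F ⊆ s ∧ Continuous F ∧ Injective F := by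
  obtain ⟨β, _, _, f, hf, rfl⟩ := analyticSet_iff_exists_polishSpace_range.1 hs
  let := TopologicalSpace.upgradeIsCompletelyMetrizable β
  obtain ⟨φ, hφ, hinj⟩ := exists_continuous_injective_comp_of_not_countable_range hf hunc
  exact ⟨f ∘ φ, range_comp_subset_range φ f, hf.comp hφ, hinj⟩

section Ideal

variable {X : Type*} {I : Set (Set X)}

theorem IsIdeal.exists_homeomorph_cantor_mem [TopologicalSpace X] [T25Space X]
    (hI : IsIdeal I) (hunc : ∃ A ∈ I, ¬A.Countable) (hb : HasBaseWith I AnalyticSet) :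
    ∃ B ∈ I, Nonempty (B ≃ₜ (ℕ → Bool)) := by
  obtain ⟨A, hAI, hA⟩ := hunc
  obtain ⟨𝓑, h𝓑I, hcofinal, hanalytic⟩ := hb
  obtain ⟨C, hC𝓑, hAC⟩ := hcofinal A hAI
  obtain ⟨F, hFC, hF, hinj⟩ := (hanalytic C hC𝓑).exists_nat_bool_injection_of_not_countable
    fun hC => hA (hC.mono hAC)
  exact ⟨range F, hI.2.1 C (h𝓑I hC𝓑) _ hFC,
    ⟨(hF.isClosedEmbedding hinj).toIsEmbedding.toHomeomorph.symm⟩⟩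

theorem TopInvariant.mem_of_image_mem [TopologicalSpace X] (hinv : TopInvariant I)
    (h : X ≃ₜ X) {A : Set X} (hA : h '' A ∈ I) : A ∈ I := by
  rw [← hinv h.symm]
  exact ⟨h '' A, hA, (h.symm_image_image A).symm⟩

theorem IsSigmaIdeal.sigmaGenerated_subset (hI : IsSigmaIdeal I) {F : Set (Set X)}
    (hF : F ⊆ I) : sigmaGenerated F ⊆ I := by
  rintro A ⟨S, hS, hAS⟩
  exact hI.1.2.1 _ (hI.2 S fun n => hF (hS n)) A hAS

end Ideal

theorem IsMinimalCantorSet.mem_of_isIdeal {A B : Set HilbertCube} {I : Set (Set HilbertCube)}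
    (hA : IsMinimalCantorSet A) (hI : IsIdeal I) (hinv : TopInvariant I) (hBI : B ∈ I)
    (hB : IsCantorSet B) : A ∈ I :=
  let ⟨h, hAB⟩ := hA.2 B hB
  hinv.mem_of_image_mem h (hI.2.1 B hBI _ hAB)

/-- Every minimal Cantor set belongs to every non-trivial topologically invariant ideal
with analytic base on the Hilbert cube; consequently for σ-ideals, `σC₀ ⊆ I`. -/
theorem minimal_cantor_sets_in_every_ideal (I : Set (Set HilbertCube))
    (hI : IsIdeal I) (hnt : NontrivialIdeal I) (hinv : TopInvariant I)
    (hb : HasBaseWith I MeasureTheory.AnalyticSet) :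
    CantorFamily ⊆ I ∧ (IsSigmaIdeal I → sigmaC0 ⊆ I) := by
  obtain ⟨B, hBI, hB⟩ := hI.exists_homeomorph_cantor_mem hnt.1 hb
  have hC₀ : CantorFamily ⊆ I := fun A hA => IsMinimalCantorSet.mem_of_isIdeal hA hI hinv hBI hB
  exact ⟨hC₀, fun hσ => hσ.sigmaGenerated_subset hC₀⟩
end

section
/- If I is a topologically invariant ideal with BP-base on the Hilbert cube I^ω and I is not contained in the meager ideal M, then every minimal dense G_δ-subset of I^ω belongs to I; consequently, if moreover I is a σ-ideal, then σG₀ ⊆ I. -/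
open Set Topology Cardinal

section MeagreImage


variable {X : Type*} [TopologicalSpace X]

lemma my_meagre_image (e : X ≃ₜ X) {s : Set X} (hs : IsMeagre s) : IsMeagre (e '' s) := by
  rw [IsMeagre, mem_residual_iff] at hs ⊢
  obtain ⟨S, ho, hd, hc, hsub⟩ := hs
  refine ⟨(fun t => e '' t) '' S, ?_, ?_, hc.image _, ?_⟩
  · rintro t ⟨u, hu, rfl⟩
    exact e.isOpenMap u (ho u hu)
  · rintro t ⟨u, hu, rfl⟩
    rw [dense_iff_closure_eq, ← Homeomorph.image_closure,
      (hd u hu).closure_eq, image_univ, e.range_coe]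
  · intro x hx
    have hsymm : e.symm x ∈ ⋂₀ S := by
      intro t ht
      have := hx (e '' t) ⟨t, ht, rfl⟩
      obtain ⟨y, hy, hyx⟩ := this
      rwa [show e.symm x = y from by rw [← hyx]; exact e.symm_apply_apply y]
    have := hsub hsymm
    intro hmem
    obtain ⟨y, hy, hyx⟩ := hmem
    exact this (by rwa [show e.symm x = y from by rw [← hyx]; exact e.symm_apply_apply y])

end MeagreImage





lemma my_ideal_finset_union {X ι : Type*} {I : Set (Set X)} (hI : IsIdeal I)
    (t : Finset ι) (g : ι → Set X) (hg : ∀ i ∈ t, g i ∈ I) : (⋃ i ∈ t, g i) ∈ I := by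
  classical
  induction t using Finset.induction with
  | empty =>
    simp only [Finset.notMem_empty, iUnion_of_empty, iUnion_empty]
    obtain ⟨A, hA⟩ := hI.1
    exact hI.2.1 A hA ∅ (empty_subset _)
  | @insert a s hx ih =>
    rw [Finset.set_biUnion_insert]
    exact hI.2.2 _ (hg a (Finset.mem_insert_self a s)) _
      (ih fun i hi => hg i (Finset.mem_insert_of_mem hi))

lemma my_ideal_fintype_union {X ι : Type*} [Fintype ι] {I : Set (Set X)} (hI : IsIdeal I)
    (g : ι → Set X) (hg : ∀ i, g i ∈ I) : (⋃ i, g i) ∈ I := by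
  have : (⋃ i, g i) = ⋃ i ∈ Finset.univ, g i := by simp
  rw [this]
  exact my_ideal_finset_union hI _ _ fun i _ => hg i



/-- Piecewise-linear map on `ℝ` with knots `c ↦ a`, `d ↦ b`, fixing `0` and `1`. -/
noncomputable def myPL (c d a b t : ℝ) : ℝ :=
  if t ≤ c then t * (a / c)
  else if t ≤ d then a + (t - c) * ((b - a) / (d - c))
  else b + (t - d) * ((1 - b) / (1 - d))

section PL
variable {c d a b : ℝ} (hc : 0 < c) (hcd : c < d) (hd : d < 1)
  (ha : 0 < a) (hab : a < b) (hb : b < 1)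

lemma myPL_eq1 {t : ℝ} (h : t ≤ c) : myPL c d a b t = t * (a / c) := if_pos h

lemma myPL_eq2 {t : ℝ} (h1 : c < t) (h2 : t ≤ d) :
    myPL c d a b t = a + (t - c) * ((b - a) / (d - c)) := by
  rw [myPL, if_neg (not_le.mpr h1), if_pos h2]

lemma myPL_eq3 (hcd' : c < d) {t : ℝ} (h : d < t) :
    myPL c d a b t = b + (t - d) * ((1 - b) / (1 - d)) := by
  rw [myPL, if_neg (not_le.mpr (lt_trans hcd' h)), if_neg (not_le.mpr h)]

include hc hcd hd ha hab hb

lemma myPL_strictMono : StrictMono (myPL c d a b) := by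
  have hac : c * (a / c) = a := by rw [mul_comm]; exact div_mul_cancel₀ a hc.ne'
  have hs2 : (d - c) * ((b - a) / (d - c)) = b - a := by
    rw [mul_comm]; exact div_mul_cancel₀ _ (sub_pos.mpr hcd).ne'
  have hs3 : (1 - d) * ((1 - b) / (1 - d)) = 1 - b := by
    rw [mul_comm]; exact div_mul_cancel₀ _ (sub_pos.mpr hd).ne'
  have p1 : 0 < a / c := div_pos ha hc
  have p2 : 0 < (b - a) / (d - c) := div_pos (by linarith) (by linarith)
  have p3 : 0 < (1 - b) / (1 - d) := div_pos (by linarith) (by linarith)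
  intro s t hst
  rcases le_or_gt s c with hs1 | hs1
  · rcases le_or_gt t c with ht1 | ht1
    · rw [myPL_eq1 hs1, myPL_eq1 ht1]; nlinarith
    · have hsa : myPL c d a b s ≤ a := by rw [myPL_eq1 hs1]; nlinarith
      rcases le_or_gt t d with ht2 | ht2
      · rw [myPL_eq2 ht1 ht2]; nlinarith
      · rw [myPL_eq3 hcd ht2]; nlinarith
  · rcases le_or_gt s d with hs2' | hs2'
    · have ht1 : c < t := lt_trans hs1 hst
      rcases le_or_gt t d with ht2 | ht2
      · rw [myPL_eq2 hs1 hs2', myPL_eq2 ht1 ht2]; nlinarith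
      · have : myPL c d a b s ≤ b := by rw [myPL_eq2 hs1 hs2']; nlinarith
        rw [myPL_eq3 hcd ht2]; nlinarith
    · have ht2 : d < t := lt_trans hs2' hst
      rw [myPL_eq3 hcd hs2', myPL_eq3 hcd ht2]; nlinarith

lemma myPL_mem {t : ℝ} (ht0 : 0 ≤ t) (ht1 : t ≤ 1) :
    0 ≤ myPL c d a b t ∧ myPL c d a b t ≤ 1 := by
  have hac : c * (a / c) = a := by rw [mul_comm]; exact div_mul_cancel₀ a hc.ne'
  have hs2 : (d - c) * ((b - a) / (d - c)) = b - a := by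
    rw [mul_comm]; exact div_mul_cancel₀ _ (sub_pos.mpr hcd).ne'
  have hs3 : (1 - d) * ((1 - b) / (1 - d)) = 1 - b := by
    rw [mul_comm]; exact div_mul_cancel₀ _ (sub_pos.mpr hd).ne'
  have p1 : 0 < a / c := div_pos ha hc
  have p2 : 0 < (b - a) / (d - c) := div_pos (by linarith) (by linarith)
  have p3 : 0 < (1 - b) / (1 - d) := div_pos (by linarith) (by linarith)
  rcases le_or_gt t c with h1 | h1
  · rw [myPL_eq1 h1]; constructor <;> nlinarith
  · rcases le_or_gt t d with h2 | h2
    · rw [myPL_eq2 h1 h2]; constructor <;> nlinarith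
    · rw [myPL_eq3 hcd h2]; constructor <;> nlinarith

lemma myPL_bounds {t : ℝ} (htc : c ≤ t) (htd : t ≤ d) :
    a ≤ myPL c d a b t ∧ myPL c d a b t ≤ b := by
  have hac : c * (a / c) = a := by rw [mul_comm]; exact div_mul_cancel₀ a hc.ne'
  have hs2 : (d - c) * ((b - a) / (d - c)) = b - a := by
    rw [mul_comm]; exact div_mul_cancel₀ _ (sub_pos.mpr hcd).ne'
  have p1 : 0 < a / c := div_pos ha hc
  have p2 : 0 < (b - a) / (d - c) := div_pos (by linarith) (by linarith)
  rcases le_or_gt t c with h1 | h1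
  · have : t = c := le_antisymm h1 htc
    subst this
    rw [myPL_eq1 le_rfl]
    constructor <;> nlinarith
  · rw [myPL_eq2 h1 htd]
    constructor <;> nlinarith

lemma myPL_inv {t : ℝ} : myPL a b c d (myPL c d a b t) = t := by
  have hac : c * (a / c) = a := by rw [mul_comm]; exact div_mul_cancel₀ a hc.ne'
  have hs2 : (d - c) * ((b - a) / (d - c)) = b - a := by
    rw [mul_comm]; exact div_mul_cancel₀ _ (sub_pos.mpr hcd).ne'
  have hs3 : (1 - d) * ((1 - b) / (1 - d)) = 1 - b := by
    rw [mul_comm]; exact div_mul_cancel₀ _ (sub_pos.mpr hd).ne'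
  have p1 : 0 < a / c := div_pos ha hc
  have p2 : 0 < (b - a) / (d - c) := div_pos (by linarith) (by linarith)
  have p3 : 0 < (1 - b) / (1 - d) := div_pos (by linarith) (by linarith)
  rcases le_or_gt t c with h1 | h1
  · rw [myPL_eq1 h1]
    have hle : t * (a / c) ≤ a := by nlinarith
    rw [myPL_eq1 hle]
    field_simp
  · rcases le_or_gt t d with h2 | h2
    · rw [myPL_eq2 h1 h2]
      have hlo : a < a + (t - c) * ((b - a) / (d - c)) := by nlinarith
      have hhi : a + (t - c) * ((b - a) / (d - c)) ≤ b := by nlinarith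
      have hba : b - a ≠ 0 := (sub_pos.mpr hab).ne'
      have hdc : d - c ≠ 0 := (sub_pos.mpr hcd).ne'
      have one1 : (b - a) / (d - c) * ((d - c) / (b - a)) = 1 := by
        field_simp
      rw [myPL_eq2 hlo hhi, add_sub_cancel_left, mul_assoc, one1, mul_one]
      ring
    · rw [myPL_eq3 hcd h2]
      have hlo : b < b + (t - d) * ((1 - b) / (1 - d)) := by nlinarith
      have hb1 : (1:ℝ) - b ≠ 0 := (sub_pos.mpr hb).ne'
      have hd1 : (1:ℝ) - d ≠ 0 := (sub_pos.mpr hd).ne'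
      have one2 : (1 - b) / (1 - d) * ((1 - d) / (1 - b)) = 1 := by
        field_simp
      rw [myPL_eq3 hab hlo, add_sub_cancel_left, mul_assoc, one2, mul_one]
      ring

end PL

noncomputable def myPLIso {c d a b : ℝ} (hc : 0 < c) (hcd : c < d) (hd : d < 1)
    (ha : 0 < a) (hab : a < b) (hb : b < 1) :
    (↥(Set.Icc (0:ℝ) 1)) ≃o (↥(Set.Icc (0:ℝ) 1)) where
  toFun := fun x => ⟨myPL c d a b x.1,
    by
      have := myPL_mem hc hcd hd ha hab hb x.2.1 x.2.2
      exact ⟨this.1, this.2⟩⟩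
  invFun := fun y => ⟨myPL a b c d y.1,
    by
      have := myPL_mem ha hab hb hc hcd hd y.2.1 y.2.2
      exact ⟨this.1, this.2⟩⟩
  left_inv := fun x => Subtype.ext (myPL_inv hc hcd hd ha hab hb)
  right_inv := fun y => Subtype.ext (myPL_inv ha hab hb hc hcd hd)
  map_rel_iff' := by
    intro x y
    constructor
    · intro hxy
      by_contra hlt
      push_neg at hlt
      have := myPL_strictMono hc hcd hd ha hab hb (Subtype.coe_lt_coe.mpr hlt)
      exact absurd hxy (not_le.mpr (Subtype.mk_lt_mk.mpr this))
    · intro hxy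
      rcases eq_or_lt_of_le hxy with rfl | hlt
      · exact le_rfl
      · exact le_of_lt (Subtype.mk_lt_mk.mpr
          (myPL_strictMono hc hcd hd ha hab hb (Subtype.coe_lt_coe.mpr hlt)))

lemma exists_squeeze_homeo {a b : ℝ} (ha : 0 < a) (hab : a < b) (hb : b < 1) :
    ∃ g : (↥(Set.Icc (0:ℝ) 1)) ≃ₜ (↥(Set.Icc (0:ℝ) 1)),
      ∀ z : ↥(Set.Icc (0:ℝ) 1), (1/4:ℝ) ≤ z.1 → z.1 ≤ 3/4 →
        a ≤ (g z).1 ∧ (g z).1 ≤ b := by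
  have hc : (0:ℝ) < 1/4 := by norm_num
  have hcd : (1:ℝ)/4 < 3/4 := by norm_num
  have hd : (3:ℝ)/4 < 1 := by norm_num
  refine ⟨(myPLIso hc hcd hd ha hab hb).toHomeomorph, fun z h1 h2 => ?_⟩
  have heq : (((myPLIso hc hcd hd ha hab hb).toHomeomorph) z).1
      = myPL (1/4) (3/4) a b z.1 := rfl
  rw [heq]
  exact myPL_bounds hc hcd hd ha hab hb h1 h2



/-! Radial comparison map between sup-norm and 1-norm "balls" in `ℝ × ℝ`. -/

noncomputable def mr (v : ℝ × ℝ) : ℝ × ℝ := ((max |v.1| |v.2|) / (|v.1| + |v.2|)) • v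

noncomputable def mri (v : ℝ × ℝ) : ℝ × ℝ := ((|v.1| + |v.2|) / (max |v.1| |v.2|)) • v

lemma n1_pos {v : ℝ × ℝ} (hv : v ≠ 0) : 0 < |v.1| + |v.2| := by
  rcases lt_or_eq_of_le (by positivity : (0:ℝ) ≤ |v.1| + |v.2|) with h | h
  · exact h
  · exfalso
    apply hv
    have h1 : |v.1| = 0 := by
      have := abs_nonneg v.1; have := abs_nonneg v.2; linarith
    have h2 : |v.2| = 0 := by
      have := abs_nonneg v.1; have := abs_nonneg v.2; linarith
    exact Prod.ext (abs_eq_zero.mp h1) (abs_eq_zero.mp h2)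

lemma ni_pos {v : ℝ × ℝ} (hv : v ≠ 0) : 0 < max |v.1| |v.2| := by
  have h := n1_pos hv
  rcases le_total |v.1| |v.2| with h' | h'
  · rw [max_eq_right h']; linarith [abs_nonneg v.1]
  · rw [max_eq_left h']; linarith [abs_nonneg v.2]

lemma ni_le_n1 (v : ℝ × ℝ) : max |v.1| |v.2| ≤ |v.1| + |v.2| := by
  apply max_le <;> [linarith [abs_nonneg v.2]; linarith [abs_nonneg v.1]]

lemma n1_le_two_ni (v : ℝ × ℝ) : |v.1| + |v.2| ≤ 2 * max |v.1| |v.2| := by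
  have := le_max_left |v.1| |v.2|
  have := le_max_right |v.1| |v.2|
  linarith

lemma smul_fst (l : ℝ) (v : ℝ × ℝ) : (l • v).1 = l * v.1 := rfl
lemma smul_snd (l : ℝ) (v : ℝ × ℝ) : (l • v).2 = l * v.2 := rfl

lemma n1_smul {l : ℝ} (hl : 0 ≤ l) (v : ℝ × ℝ) :
    |(l • v).1| + |(l • v).2| = l * (|v.1| + |v.2|) := by
  rw [smul_fst, smul_snd, abs_mul, abs_mul, abs_of_nonneg hl]; ring

lemma ni_smul {l : ℝ} (hl : 0 ≤ l) (v : ℝ × ℝ) :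
    max |(l • v).1| |(l • v).2| = l * max |v.1| |v.2| := by
  rw [smul_fst, smul_snd, abs_mul, abs_mul, abs_of_nonneg hl]
  rcases le_total |v.1| |v.2| with h | h
  · rw [max_eq_right h, max_eq_right (by nlinarith)]
  · rw [max_eq_left h, max_eq_left (by nlinarith)]

lemma mr_zero : mr 0 = 0 := by simp [mr]

lemma mri_zero : mri 0 = 0 := by simp [mri]

lemma n1_mr (v : ℝ × ℝ) : |(mr v).1| + |(mr v).2| = max |v.1| |v.2| := by
  by_cases hv : v = 0
  · subst hv; simp [mr]
  · have h1 := n1_pos hv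
    have h2 := ni_pos hv
    rw [mr, n1_smul (by positivity)]
    field_simp

lemma ni_mri (v : ℝ × ℝ) : max |(mri v).1| |(mri v).2| = |v.1| + |v.2| := by
  by_cases hv : v = 0
  · subst hv; simp [mri]
  · have h1 := n1_pos hv
    have h2 := ni_pos hv
    rw [mri, ni_smul (by positivity)]
    field_simp

lemma mri_mr (v : ℝ × ℝ) : mri (mr v) = v := by
  by_cases hv : v = 0
  · subst hv; rw [mr_zero, mri_zero]
  · have h1 := n1_pos hv
    have h2 := ni_pos hv
    set l := (max |v.1| |v.2|) / (|v.1| + |v.2|) with hl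
    have hlpos : 0 < l := by positivity
    have e1 : |(mr v).1| + |(mr v).2| = l * (|v.1| + |v.2|) := n1_smul hlpos.le v
    have e2 : max |(mr v).1| |(mr v).2| = l * max |v.1| |v.2| := ni_smul hlpos.le v
    have hc2 : (|(mr v).1| + |(mr v).2|) / (max |(mr v).1| |(mr v).2|)
        = (|v.1| + |v.2|) / (max |v.1| |v.2|) := by
      rw [e1, e2, mul_div_mul_left _ _ hlpos.ne']
    rw [mri, hc2]
    show ((|v.1| + |v.2|) / (max |v.1| |v.2|)) • (l • v) = v
    rw [smul_smul, hl]
    have hone : (|v.1| + |v.2|) / (max |v.1| |v.2|) * ((max |v.1| |v.2|) / (|v.1| + |v.2|)) = 1 := by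
      rw [div_mul_div_comm, div_eq_one_iff_eq (by positivity)]
      ring
    rw [hone, one_smul]

lemma mr_mri (v : ℝ × ℝ) : mr (mri v) = v := by
  by_cases hv : v = 0
  · subst hv; rw [mri_zero, mr_zero]
  · have h1 := n1_pos hv
    have h2 := ni_pos hv
    set l := (|v.1| + |v.2|) / (max |v.1| |v.2|) with hl
    have hlpos : 0 < l := by positivity
    have e1 : |(mri v).1| + |(mri v).2| = l * (|v.1| + |v.2|) := n1_smul hlpos.le v
    have e2 : max |(mri v).1| |(mri v).2| = l * max |v.1| |v.2| := ni_smul hlpos.le v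
    have hc2 : (max |(mri v).1| |(mri v).2|) / (|(mri v).1| + |(mri v).2|)
        = (max |v.1| |v.2|) / (|v.1| + |v.2|) := by
      rw [e1, e2, mul_div_mul_left _ _ hlpos.ne']
    rw [mr, hc2]
    show ((max |v.1| |v.2|) / (|v.1| + |v.2|)) • (l • v) = v
    rw [smul_smul, hl]
    have hone : (max |v.1| |v.2|) / (|v.1| + |v.2|) * ((|v.1| + |v.2|) / (max |v.1| |v.2|)) = 1 := by
      rw [div_mul_div_comm, div_eq_one_iff_eq (by positivity)]
      ring
    rw [hone, one_smul]

lemma cont_aux_n1 : Continuous (fun v : ℝ × ℝ => |v.1| + |v.2|) :=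
  (continuous_fst.abs).add (continuous_snd.abs)

lemma cont_aux_ni : Continuous (fun v : ℝ × ℝ => max |v.1| |v.2|) :=
  (continuous_fst.abs).max (continuous_snd.abs)

lemma cont_mr : Continuous mr := by
  rw [continuous_iff_continuousAt]
  intro v
  by_cases hv : v = 0
  · subst hv
    rw [ContinuousAt, mr_zero]
    apply squeeze_zero_norm (a := fun w : ℝ × ℝ => ‖w‖)
    · intro w
      have hle : (max |w.1| |w.2|) / (|w.1| + |w.2|) ≤ 1 := by
        by_cases hw : w = 0
        · subst hw; simp
        · rw [div_le_one (n1_pos hw)]; exact ni_le_n1 w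
      have h0 : 0 ≤ (max |w.1| |w.2|) / (|w.1| + |w.2|) := by positivity
      rw [mr, norm_smul, Real.norm_eq_abs, abs_of_nonneg h0]
      nlinarith [norm_nonneg w]
    · exact tendsto_norm_zero
  · exact ((cont_aux_ni.continuousAt.div cont_aux_n1.continuousAt
      (n1_pos hv).ne').smul continuousAt_id)

lemma cont_mri : Continuous mri := by
  rw [continuous_iff_continuousAt]
  intro v
  by_cases hv : v = 0
  · subst hv
    rw [ContinuousAt, mri_zero]
    apply squeeze_zero_norm (a := fun w : ℝ × ℝ => 2 * ‖w‖)
    · intro w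
      have hle : (|w.1| + |w.2|) / (max |w.1| |w.2|) ≤ 2 := by
        by_cases hw : w = 0
        · subst hw; simp
        · rw [div_le_iff₀ (ni_pos hw)]; exact n1_le_two_ni w
      have h0 : 0 ≤ (|w.1| + |w.2|) / (max |w.1| |w.2|) := by positivity
      rw [mri, norm_smul, Real.norm_eq_abs, abs_of_nonneg h0]
      nlinarith [norm_nonneg w]
    · simpa using (tendsto_norm_zero.const_mul (2:ℝ))
  · exact ((cont_aux_n1.continuousAt.div cont_aux_ni.continuousAt
      (ni_pos hv).ne').smul continuousAt_id)

noncomputable def mRadH : (ℝ × ℝ) ≃ₜ (ℝ × ℝ) where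
  toFun := mr
  invFun := mri
  left_inv := mri_mr
  right_inv := mr_mri
  continuous_toFun := cont_mr
  continuous_invFun := cont_mri

noncomputable def Tlin : (ℝ × ℝ) ≃ₜ (ℝ × ℝ) where
  toFun v := (v.1 + v.2, v.2 - v.1)
  invFun u := ((u.1 - u.2) / 2, (u.1 + u.2) / 2)
  left_inv v := by ext <;> simp <;> ring
  right_inv u := by ext <;> simp <;> ring
  continuous_toFun := by fun_prop
  continuous_invFun := by fun_prop

def rhoH : (ℝ × ℝ) ≃ₜ (ℝ × ℝ) where
  toFun v := (-v.2, v.1)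
  invFun u := (u.2, -u.1)
  left_inv v := by ext <;> simp
  right_inv u := by ext <;> simp
  continuous_toFun := by fun_prop
  continuous_invFun := by fun_prop

/-- `max (|x+y|) (|y-x|) = |x| + |y|`. -/
lemma abs_id1 (x y : ℝ) : max |x + y| |y - x| = |x| + |y| := by
  rcases max_cases |x + y| |y - x| with ⟨h1, h2⟩ | ⟨h1, h2⟩ <;>
  rcases abs_cases (x + y) with ⟨h3, h3'⟩ | ⟨h3, h3'⟩ <;>
  rcases abs_cases (y - x) with ⟨h4, h4'⟩ | ⟨h4, h4'⟩ <;>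
  rcases abs_cases x with ⟨h5, h5'⟩ | ⟨h5, h5'⟩ <;>
  rcases abs_cases y with ⟨h6, h6'⟩ | ⟨h6, h6'⟩ <;>
  linarith

/-- `|x+y| + |x-y| = 2 * max |x| |y|`. -/
lemma abs_id2 (x y : ℝ) : |x + y| + |x - y| = 2 * max |x| |y| := by
  rcases max_cases |x| |y| with ⟨h1, h2⟩ | ⟨h1, h2⟩ <;>
  rcases abs_cases (x + y) with ⟨h3, h3'⟩ | ⟨h3, h3'⟩ <;>
  rcases abs_cases (x - y) with ⟨h4, h4'⟩ | ⟨h4, h4'⟩ <;>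
  rcases abs_cases x with ⟨h5, h5'⟩ | ⟨h5, h5'⟩ <;>
  rcases abs_cases y with ⟨h6, h6'⟩ | ⟨h6, h6'⟩ <;>
  linarith

noncomputable def Hsq : (ℝ × ℝ) ≃ₜ (ℝ × ℝ) := mRadH.trans Tlin

lemma ni_Hsq (v : ℝ × ℝ) : max |(Hsq v).1| |(Hsq v).2| = max |v.1| |v.2| := by
  have h1 : Hsq v = ((mr v).1 + (mr v).2, (mr v).2 - (mr v).1) := rfl
  rw [h1]
  show max |(mr v).1 + (mr v).2| |(mr v).2 - (mr v).1| = _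
  rw [abs_id1, n1_mr]

lemma Hsq_symm_eq (w : ℝ × ℝ) : Hsq.symm w = mri ((w.1 - w.2) / 2, (w.1 + w.2) / 2) := rfl

lemma ni_Hsq_symm (w : ℝ × ℝ) : max |(Hsq.symm w).1| |(Hsq.symm w).2| = max |w.1| |w.2| := by
  rw [Hsq_symm_eq, ni_mri]
  show |(w.1 - w.2) / 2| + |(w.1 + w.2) / 2| = _
  rw [abs_div, abs_div, abs_of_pos (by norm_num : (0:ℝ) < 2)]
  have := abs_id2 w.1 w.2
  have habs : |w.1 - w.2| = |w.1 - w.2| := rfl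
  linarith [abs_id2 w.1 w.2]

lemma ni_rho (v : ℝ × ℝ) : max |(rhoH v).1| |(rhoH v).2| = max |v.1| |v.2| := by
  show max |(-v.2)| |v.1| = _
  rw [abs_neg, max_comm]

lemma ni_rho_symm (v : ℝ × ℝ) : max |(rhoH.symm v).1| |(rhoH.symm v).2| = max |v.1| |v.2| := by
  show max |v.2| |(-v.1)| = _
  rw [abs_neg, max_comm]

lemma mri_fst_bound {u : ℝ × ℝ} (hn1 : |u.1| + |u.2| ≤ 1) (hni : 1/2 ≤ max |u.1| |u.2|)
    (hu1 : |u.1| ≤ 1/4) : |(mri u).1| ≤ 1/2 := by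
  have hnipos : (0:ℝ) < max |u.1| |u.2| := lt_of_lt_of_le (by norm_num) hni
  have he : (mri u).1 = ((|u.1| + |u.2|) / (max |u.1| |u.2|)) * u.1 := rfl
  rw [he, abs_mul, abs_of_nonneg (by positivity : (0:ℝ) ≤ (|u.1| + |u.2|) / (max |u.1| |u.2|))]
  rw [div_mul_eq_mul_div, div_le_iff₀ hnipos]
  nlinarith [abs_nonneg u.1, abs_nonneg u.2]

lemma Hsq_symm_fst_bound (w : ℝ × ℝ) (hd : |w.1 - w.2| ≤ 1/2) (hs : 1 ≤ |w.1 + w.2|)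
    (hm : max |w.1| |w.2| ≤ 1) : |(Hsq.symm w).1| ≤ 1/2 := by
  rw [Hsq_symm_eq]
  have e1 : |((w.1 - w.2) / 2 : ℝ)| = |w.1 - w.2| / 2 := by
    rw [abs_div, abs_of_pos (by norm_num : (0:ℝ) < 2)]
  have e2 : |((w.1 + w.2) / 2 : ℝ)| = |w.1 + w.2| / 2 := by
    rw [abs_div, abs_of_pos (by norm_num : (0:ℝ) < 2)]
  apply mri_fst_bound
  · show |((w.1 - w.2) / 2 : ℝ)| + |((w.1 + w.2) / 2 : ℝ)| ≤ 1
    rw [e1, e2]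
    linarith [abs_id2 w.1 w.2]
  · show 1/2 ≤ max |((w.1 - w.2) / 2 : ℝ)| |((w.1 + w.2) / 2 : ℝ)|
    rw [e1, e2]
    refine le_trans ?_ (le_max_right _ _)
    linarith
  · show |((w.1 - w.2) / 2 : ℝ)| ≤ 1/4
    rw [e1]
    linarith

lemma core_cover (w : ℝ × ℝ) (h1 : |w.1| ≤ 1) (h2 : |w.2| ≤ 1) :
    |w.1| ≤ 1/2 ∨ |(Hsq.symm w).1| ≤ 1/2 ∨ |(rhoH.symm w).1| ≤ 1/2 ∨
      |((Hsq.trans rhoH).symm w).1| ≤ 1/2 := by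
  by_cases ha1 : |w.1| ≤ 1/2
  · exact Or.inl ha1
  by_cases ha2 : |w.2| ≤ 1/2
  · refine Or.inr (Or.inr (Or.inl ?_))
    show |w.2| ≤ 1/2
    exact ha2
  push_neg at ha1 ha2
  have hb1 := abs_le.mp h1
  have hb2 := abs_le.mp h2
  rcases le_or_gt 0 (w.1 * w.2) with hsame | hopp
  · -- same sign : use Hsq
    refine Or.inr (Or.inl ?_)
    apply Hsq_symm_fst_bound w ?_ ?_ (max_le h1 h2)
    · rcases le_or_gt 0 w.1 with hs1 | hs1
      · have hw1 : 1/2 < w.1 := by rwa [abs_of_nonneg hs1] at ha1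
        have hs2 : 0 ≤ w.2 := by nlinarith
        have hw2 : 1/2 < w.2 := by rwa [abs_of_nonneg hs2] at ha2
        rw [abs_le]; constructor <;> linarith
      · have hw1 : 1/2 < -w.1 := by rwa [abs_of_neg hs1] at ha1
        have hs2 : w.2 ≤ 0 := by nlinarith
        have hw2 : 1/2 < -w.2 := by
          rcases lt_or_eq_of_le hs2 with h | h
          · rwa [abs_of_neg h] at ha2
          · exfalso; rw [h] at ha2; simp at ha2; linarith
        rw [abs_le]; constructor <;> linarith
    · rcases le_or_gt 0 w.1 with hs1 | hs1
      · have hw1 : 1/2 < w.1 := by rwa [abs_of_nonneg hs1] at ha1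
        have hs2 : 0 ≤ w.2 := by nlinarith
        have hw2 : 1/2 < w.2 := by rwa [abs_of_nonneg hs2] at ha2
        rw [le_abs]; left; linarith
      · have hw1 : 1/2 < -w.1 := by rwa [abs_of_neg hs1] at ha1
        have hs2 : w.2 ≤ 0 := by nlinarith
        have hw2 : 1/2 < -w.2 := by
          rcases lt_or_eq_of_le hs2 with h | h
          · rwa [abs_of_neg h] at ha2
          · exfalso; rw [h] at ha2; simp at ha2; linarith
        rw [le_abs]; right; linarith
  · -- opposite signs : use Hsq then rho
    refine Or.inr (Or.inr (Or.inr ?_))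
    have he : ((Hsq.trans rhoH).symm w).1 = (Hsq.symm (w.2, -w.1)).1 := rfl
    rw [he]
    apply Hsq_symm_fst_bound (w.2, -w.1) ?_ ?_ ?_
    · show |w.2 - -w.1| ≤ 1/2
      rcases le_or_gt 0 w.1 with hs1 | hs1
      · have hw1 : 1/2 < w.1 := by rwa [abs_of_nonneg hs1] at ha1
        have hs2 : w.2 < 0 := by nlinarith
        have hw2 : 1/2 < -w.2 := by rwa [abs_of_neg hs2] at ha2
        rw [abs_le]; constructor <;> linarith
      · have hw1 : 1/2 < -w.1 := by rwa [abs_of_neg hs1] at ha1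
        have hs2 : 0 < w.2 := by nlinarith
        have hw2 : 1/2 < w.2 := by rwa [abs_of_nonneg hs2.le] at ha2
        rw [abs_le]; constructor <;> linarith
    · show 1 ≤ |w.2 + -w.1|
      rcases le_or_gt 0 w.1 with hs1 | hs1
      · have hw1 : 1/2 < w.1 := by rwa [abs_of_nonneg hs1] at ha1
        have hs2 : w.2 < 0 := by nlinarith
        have hw2 : 1/2 < -w.2 := by rwa [abs_of_neg hs2] at ha2
        rw [le_abs]; right; linarith
      · have hw1 : 1/2 < -w.1 := by rwa [abs_of_neg hs1] at ha1
        have hs2 : 0 < w.2 := by nlinarith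
        have hw2 : 1/2 < w.2 := by rwa [abs_of_nonneg hs2.le] at ha2
        rw [le_abs]; left; linarith
    · show max |w.2| |(-w.1)| ≤ 1
      rw [abs_neg]
      exact max_le h2 h1

lemma mem_Icc_of_abs {r : ℝ} (h : |r| ≤ 1) : (r + 1) / 2 ∈ Set.Icc (0:ℝ) 1 := by
  rw [abs_le] at h
  constructor <;> [linarith [h.1]; linarith [h.2]]

lemma abs_of_mem_Icc {x : ℝ} (hx : x ∈ Set.Icc (0:ℝ) 1) : |2 * x - 1| ≤ 1 := by
  rw [abs_le]
  constructor <;> [linarith [hx.1]; linarith [hx.2]]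

/-- Restrict a homeomorphism of the plane preserving the square `[-1,1]²` to a
homeomorphism of `[0,1] × [0,1]` via the affine identification. -/
noncomputable def mySq (Φ : (ℝ × ℝ) ≃ₜ (ℝ × ℝ))
    (hΦ : ∀ v : ℝ × ℝ, max |v.1| |v.2| ≤ 1 → max |(Φ v).1| |(Φ v).2| ≤ 1)
    (hΦ' : ∀ v : ℝ × ℝ, max |v.1| |v.2| ≤ 1 → max |(Φ.symm v).1| |(Φ.symm v).2| ≤ 1) :
    (↥(Set.Icc (0:ℝ) 1) × ↥(Set.Icc (0:ℝ) 1)) ≃ₜ (↥(Set.Icc (0:ℝ) 1) × ↥(Set.Icc (0:ℝ) 1)) where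
  toFun p :=
    (⟨((Φ (2 * p.1.1 - 1, 2 * p.2.1 - 1)).1 + 1) / 2,
        mem_Icc_of_abs (le_trans (le_max_left _ _)
          (hΦ _ (max_le (abs_of_mem_Icc p.1.2) (abs_of_mem_Icc p.2.2))))⟩,
     ⟨((Φ (2 * p.1.1 - 1, 2 * p.2.1 - 1)).2 + 1) / 2,
        mem_Icc_of_abs (le_trans (le_max_right _ _)
          (hΦ _ (max_le (abs_of_mem_Icc p.1.2) (abs_of_mem_Icc p.2.2))))⟩)
  invFun p :=
    (⟨((Φ.symm (2 * p.1.1 - 1, 2 * p.2.1 - 1)).1 + 1) / 2,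
        mem_Icc_of_abs (le_trans (le_max_left _ _)
          (hΦ' _ (max_le (abs_of_mem_Icc p.1.2) (abs_of_mem_Icc p.2.2))))⟩,
     ⟨((Φ.symm (2 * p.1.1 - 1, 2 * p.2.1 - 1)).2 + 1) / 2,
        mem_Icc_of_abs (le_trans (le_max_right _ _)
          (hΦ' _ (max_le (abs_of_mem_Icc p.1.2) (abs_of_mem_Icc p.2.2))))⟩)
  left_inv p := by
    obtain ⟨⟨x, hx⟩, ⟨y, hy⟩⟩ := p
    have key : ∀ r : ℝ, 2 * ((r + 1) / 2) - 1 = r := fun r => by ring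
    have hv : Φ.symm (Φ (2 * x - 1, 2 * y - 1)) = (2 * x - 1, 2 * y - 1) :=
      Φ.symm_apply_apply _
    ext
    · show ((Φ.symm (2 * (((Φ (2 * x - 1, 2 * y - 1)).1 + 1) / 2) - 1,
          2 * (((Φ (2 * x - 1, 2 * y - 1)).2 + 1) / 2) - 1)).1 + 1) / 2 = x
      rw [key, key, Prod.mk.eta, hv]
      show ((2 * x - 1) + 1) / 2 = x
      ring
    · show ((Φ.symm (2 * (((Φ (2 * x - 1, 2 * y - 1)).1 + 1) / 2) - 1,
          2 * (((Φ (2 * x - 1, 2 * y - 1)).2 + 1) / 2) - 1)).2 + 1) / 2 = y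
      rw [key, key, Prod.mk.eta, hv]
      show ((2 * y - 1) + 1) / 2 = y
      ring
  right_inv p := by
    obtain ⟨⟨x, hx⟩, ⟨y, hy⟩⟩ := p
    have key : ∀ r : ℝ, 2 * ((r + 1) / 2) - 1 = r := fun r => by ring
    have hv : Φ (Φ.symm (2 * x - 1, 2 * y - 1)) = (2 * x - 1, 2 * y - 1) :=
      Φ.apply_symm_apply _
    ext
    · show ((Φ (2 * (((Φ.symm (2 * x - 1, 2 * y - 1)).1 + 1) / 2) - 1,
          2 * (((Φ.symm (2 * x - 1, 2 * y - 1)).2 + 1) / 2) - 1)).1 + 1) / 2 = x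
      rw [key, key, Prod.mk.eta, hv]
      show ((2 * x - 1) + 1) / 2 = x
      ring
    · show ((Φ (2 * (((Φ.symm (2 * x - 1, 2 * y - 1)).1 + 1) / 2) - 1,
          2 * (((Φ.symm (2 * x - 1, 2 * y - 1)).2 + 1) / 2) - 1)).2 + 1) / 2 = y
      rw [key, key, Prod.mk.eta, hv]
      show ((2 * y - 1) + 1) / 2 = y
      ring
  continuous_toFun := by
    have hc : Continuous (fun p : (↥(Set.Icc (0:ℝ) 1) × ↥(Set.Icc (0:ℝ) 1)) =>
        Φ (2 * (p.1 : ℝ) - 1, 2 * (p.2 : ℝ) - 1)) := by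
      apply Φ.continuous.comp
      fun_prop
    exact (((hc.fst.add continuous_const).div_const 2).subtype_mk _).prodMk
      (((hc.snd.add continuous_const).div_const 2).subtype_mk _)
  continuous_invFun := by
    have hc : Continuous (fun p : (↥(Set.Icc (0:ℝ) 1) × ↥(Set.Icc (0:ℝ) 1)) =>
        Φ.symm (2 * (p.1 : ℝ) - 1, 2 * (p.2 : ℝ) - 1)) := by
      apply Φ.symm.continuous.comp
      fun_prop
    exact (((hc.fst.add continuous_const).div_const 2).subtype_mk _).prodMk
      (((hc.snd.add continuous_const).div_const 2).subtype_mk _)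

lemma mySq_symm_fst (Φ : (ℝ × ℝ) ≃ₜ (ℝ × ℝ)) (hΦ) (hΦ') (p) :
    (((mySq Φ hΦ hΦ').symm p).1 : ℝ)
      = ((Φ.symm (2 * (p.1 : ℝ) - 1, 2 * (p.2 : ℝ) - 1)).1 + 1) / 2 := rfl

lemma hInv_Hsq : ∀ v : ℝ × ℝ, max |v.1| |v.2| ≤ 1 → max |(Hsq v).1| |(Hsq v).2| ≤ 1 :=
  fun v h => (ni_Hsq v).le.trans h |>.trans_eq rfl

lemma hInv_Hsq' : ∀ v : ℝ × ℝ, max |v.1| |v.2| ≤ 1 → max |(Hsq.symm v).1| |(Hsq.symm v).2| ≤ 1 :=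
  fun v h => (ni_Hsq_symm v).le.trans h

lemma hInv_rho : ∀ v : ℝ × ℝ, max |v.1| |v.2| ≤ 1 → max |(rhoH v).1| |(rhoH v).2| ≤ 1 :=
  fun v h => (ni_rho v).le.trans h

lemma hInv_rho' : ∀ v : ℝ × ℝ, max |v.1| |v.2| ≤ 1 → max |(rhoH.symm v).1| |(rhoH.symm v).2| ≤ 1 :=
  fun v h => (ni_rho_symm v).le.trans h

lemma hInv_HR : ∀ v : ℝ × ℝ, max |v.1| |v.2| ≤ 1 →
    max |((Hsq.trans rhoH) v).1| |((Hsq.trans rhoH) v).2| ≤ 1 := by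
  intro v h
  have e : (Hsq.trans rhoH) v = rhoH (Hsq v) := rfl
  rw [e, ni_rho, ni_Hsq]
  exact h

lemma hInv_HR' : ∀ v : ℝ × ℝ, max |v.1| |v.2| ≤ 1 →
    max |((Hsq.trans rhoH).symm v).1| |((Hsq.trans rhoH).symm v).2| ≤ 1 := by
  intro v h
  have e : (Hsq.trans rhoH).symm v = Hsq.symm (rhoH.symm v) := rfl
  rw [e, ni_Hsq_symm, ni_rho_symm]
  exact h

noncomputable def sqFam : Fin 4 →
    ((↥(Set.Icc (0:ℝ) 1) × ↥(Set.Icc (0:ℝ) 1)) ≃ₜ (↥(Set.Icc (0:ℝ) 1) × ↥(Set.Icc (0:ℝ) 1))) :=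
  ![mySq (Homeomorph.refl _) (fun _ h => h) (fun _ h => h),
    mySq Hsq hInv_Hsq hInv_Hsq',
    mySq rhoH hInv_rho hInv_rho',
    mySq (Hsq.trans rhoH) hInv_HR hInv_HR']

lemma sqFam_cover (p : ↥(Set.Icc (0:ℝ) 1) × ↥(Set.Icc (0:ℝ) 1)) :
    ∃ j : Fin 4, (1/4 : ℝ) ≤ (((sqFam j).symm p).1 : ℝ) ∧ (((sqFam j).symm p).1 : ℝ) ≤ 3/4 := by
  set w : ℝ × ℝ := (2 * (p.1 : ℝ) - 1, 2 * (p.2 : ℝ) - 1) with hw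
  have hw1 : |w.1| ≤ 1 := abs_of_mem_Icc p.1.2
  have hw2 : |w.2| ≤ 1 := abs_of_mem_Icc p.2.2
  have trans : ∀ r : ℝ, |r| ≤ 1/2 → (1/4 : ℝ) ≤ (r + 1) / 2 ∧ ((r + 1) / 2 : ℝ) ≤ 3/4 := by
    intro r hr
    rw [abs_le] at hr
    constructor <;> [linarith [hr.1]; linarith [hr.2]]
  rcases core_cover w hw1 hw2 with h | h | h | h
  · refine ⟨0, ?_⟩
    have e : (((sqFam 0).symm p).1 : ℝ)
        = (((Homeomorph.refl (ℝ × ℝ)).symm w).1 + 1) / 2 := rfl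
    rw [e]
    exact trans _ h
  · refine ⟨1, ?_⟩
    have e : (((sqFam 1).symm p).1 : ℝ) = ((Hsq.symm w).1 + 1) / 2 := rfl
    rw [e]
    exact trans _ h
  · refine ⟨2, ?_⟩
    have e : (((sqFam 2).symm p).1 : ℝ) = ((rhoH.symm w).1 + 1) / 2 := rfl
    rw [e]
    exact trans _ h
  · refine ⟨3, ?_⟩
    have e : (((sqFam 3).symm p).1 : ℝ) = (((Hsq.trans rhoH).symm w).1 + 1) / 2 := rfl
    rw [e]
    exact trans _ h


lemma strip_cover {a b : ℝ} (ha : 0 < a) (hab : a < b) (hb : b < 1) :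
    ∃ f : Fin 4 →
      ((↥(Set.Icc (0:ℝ) 1) × ↥(Set.Icc (0:ℝ) 1)) ≃ₜ (↥(Set.Icc (0:ℝ) 1) × ↥(Set.Icc (0:ℝ) 1))),
      ∀ p, ∃ j, a ≤ (((f j).symm p).1 : ℝ) ∧ (((f j).symm p).1 : ℝ) ≤ b := by
  obtain ⟨g, hg⟩ := exists_squeeze_homeo ha hab hb
  refine ⟨fun j => (g.symm.prodCongr (Homeomorph.refl _)).trans (sqFam j), fun p => ?_⟩
  obtain ⟨j, hj1, hj2⟩ := sqFam_cover p
  refine ⟨j, ?_⟩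
  have e : (((g.symm.prodCongr (Homeomorph.refl _)).trans (sqFam j)).symm p).1
      = g (((sqFam j).symm p).1) := rfl
  rw [e]
  exact hg _ hj1 hj2




noncomputable def bigAux (s : Finset ℕ) (N : ℕ)
    (G : ℕ → (↥(Set.Icc (0:ℝ) 1) × ↥(Set.Icc (0:ℝ) 1) → ↥(Set.Icc (0:ℝ) 1) × ↥(Set.Icc (0:ℝ) 1)))
    (x : HilbertCube) : HilbertCube := fun k =>
  if k ∈ s then (G k (x k, x (N + k))).1
  else if N ≤ k ∧ (k - N) ∈ s then (G (k - N) (x (k - N), x k)).2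
  else x k

lemma bigAux_comp (s : Finset ℕ) (N : ℕ) (hN : ∀ i ∈ s, i < N)
    (G G' : ℕ → (↥(Set.Icc (0:ℝ) 1) × ↥(Set.Icc (0:ℝ) 1) → ↥(Set.Icc (0:ℝ) 1) × ↥(Set.Icc (0:ℝ) 1)))
    (h : ∀ i ∈ s, ∀ p, G' i (G i p) = p) (x : HilbertCube) :
    bigAux s N G' (bigAux s N G x) = x := by
  funext k
  by_cases hk : k ∈ s
  · have hNk : ¬ (N + k ∈ s) := fun hmem => by have := hN _ hmem; omega
    have hNk2 : N ≤ N + k ∧ (N + k - N) ∈ s := ⟨Nat.le_add_right N k, by simpa using hk⟩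
    have e1 : bigAux s N G x k = (G k (x k, x (N + k))).1 := if_pos hk
    have e2 : bigAux s N G x (N + k) = (G k (x k, x (N + k))).2 := by
      rw [bigAux, if_neg hNk, if_pos hNk2, Nat.add_sub_cancel_left]
    show (if k ∈ s then (G' k (bigAux s N G x k, bigAux s N G x (N + k))).1 else _) = x k
    rw [if_pos hk, e1, e2, Prod.mk.eta, h k hk]
  · by_cases hk2 : N ≤ k ∧ (k - N) ∈ s
    · have hNi : N + (k - N) = k := Nat.add_sub_cancel' hk2.1
      have e1 : bigAux s N G x k = (G (k - N) (x (k - N), x k)).2 := by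
        rw [bigAux, if_neg hk, if_pos hk2]
      have e2 : bigAux s N G x (k - N) = (G (k - N) (x (k - N), x k)).1 := by
        rw [bigAux, if_pos hk2.2, hNi]
      show (if k ∈ s then _ else if N ≤ k ∧ (k - N) ∈ s then
          (G' (k - N) (bigAux s N G x (k - N), bigAux s N G x k)).2 else _) = x k
      rw [if_neg hk, if_pos hk2, e1, e2, Prod.mk.eta, h _ hk2.2]
    · have e1 : bigAux s N G x k = x k := by rw [bigAux, if_neg hk, if_neg hk2]
      show (if k ∈ s then _ else if N ≤ k ∧ (k - N) ∈ s then _ else bigAux s N G x k) = x k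
      rw [if_neg hk, if_neg hk2, e1]

lemma bigAux_continuous (s : Finset ℕ) (N : ℕ)
    (F : ℕ → ((↥(Set.Icc (0:ℝ) 1) × ↥(Set.Icc (0:ℝ) 1)) ≃ₜ (↥(Set.Icc (0:ℝ) 1) × ↥(Set.Icc (0:ℝ) 1))))
    : Continuous (fun x => bigAux s N (fun i => F i) x) := by
  apply continuous_pi
  intro k
  by_cases hk : k ∈ s
  · simp only [bigAux, if_pos hk]
    exact ((F k).continuous.comp ((continuous_apply k).prodMk
      (continuous_apply (N + k)))).fst
  · by_cases hk2 : N ≤ k ∧ (k - N) ∈ s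
    · simp only [bigAux, if_neg hk, if_pos hk2]
      exact ((F (k - N)).continuous.comp ((continuous_apply (k - N)).prodMk
        (continuous_apply k))).snd
    · simp only [bigAux, if_neg hk, if_neg hk2]
      exact continuous_apply k

noncomputable def myBig (s : Finset ℕ) (N : ℕ) (hN : ∀ i ∈ s, i < N)
    (F : ℕ → ((↥(Set.Icc (0:ℝ) 1) × ↥(Set.Icc (0:ℝ) 1)) ≃ₜ (↥(Set.Icc (0:ℝ) 1) × ↥(Set.Icc (0:ℝ) 1))))
    : HilbertCube ≃ₜ HilbertCube where
  toFun := bigAux s N (fun i => F i)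
  invFun := bigAux s N (fun i => (F i).symm)
  left_inv x := bigAux_comp s N hN _ _ (fun i _ p => (F i).symm_apply_apply p) x
  right_inv x := bigAux_comp s N hN _ _ (fun i _ p => (F i).apply_symm_apply p) x
  continuous_toFun := bigAux_continuous s N F
  continuous_invFun := bigAux_continuous s N (fun i => (F i).symm)

lemma myBig_symm_apply (s : Finset ℕ) (N : ℕ) (hN : ∀ i ∈ s, i < N) (F) (x : HilbertCube)
    {i : ℕ} (hi : i ∈ s) :
    (myBig s N hN F).symm x i = ((F i).symm (x i, x (N + i))).1 := if_pos hi


lemma small_interval (V : Set (↥(Set.Icc (0:ℝ) 1))) (hV : IsOpen V)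
    (t : ↥(Set.Icc (0:ℝ) 1)) (ht : t ∈ V) :
    ∃ a b : ℝ, 0 < a ∧ a < b ∧ b < 1 ∧
      ∀ y : ↥(Set.Icc (0:ℝ) 1), a ≤ (y : ℝ) → (y : ℝ) ≤ b → y ∈ V := by
  obtain ⟨ε, hε, hball⟩ := Metric.isOpen_iff.mp hV t ht
  obtain ⟨ht0, ht1⟩ := t.2
  set lo : ℝ := max ((t : ℝ) - ε / 2) 0 with hlo
  set hi : ℝ := min ((t : ℝ) + ε / 2) 1 with hhi
  have hlo0 : 0 ≤ lo := le_max_right _ _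
  have hhi1 : hi ≤ 1 := min_le_right _ _
  have hlohi : lo < hi := by
    rcases max_cases ((t : ℝ) - ε / 2) 0 with ⟨h1, h2⟩ | ⟨h1, h2⟩ <;>
      rcases min_cases ((t : ℝ) + ε / 2) 1 with ⟨h3, h4⟩ | ⟨h3, h4⟩ <;>
      rw [hlo, hhi, h1, h3] <;> linarith
  refine ⟨lo + (hi - lo) / 3, hi - (hi - lo) / 3, by linarith, by linarith, by linarith, ?_⟩
  intro y hy1 hy2
  apply hball
  rw [Metric.mem_ball, Subtype.dist_eq, Real.dist_eq, abs_lt]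
  have l1 : lo ≥ (t : ℝ) - ε / 2 := le_max_left _ _
  have l2 : hi ≤ (t : ℝ) + ε / 2 := min_le_left _ _
  constructor <;> linarith

lemma my_dense_cover (U : Set HilbertCube) (hU : IsOpen U) (hne : U.Nonempty) :
    ∃ (ι : Type) (_ : Fintype ι) (h : ι → (HilbertCube ≃ₜ HilbertCube)),
      (⋃ i, h i '' U) = Set.univ := by
  classical
  obtain ⟨x₀, hx₀⟩ := hne
  obtain ⟨I, u, hu, hpi⟩ := isOpen_pi_iff.mp hU x₀ hx₀
  -- for each i ∈ I pick a good interval and a 4-element family of square homeos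
  have hfam : ∀ i : ℕ, ∃ f : Fin 4 →
      ((↥(Set.Icc (0:ℝ) 1) × ↥(Set.Icc (0:ℝ) 1)) ≃ₜ (↥(Set.Icc (0:ℝ) 1) × ↥(Set.Icc (0:ℝ) 1))),
      i ∈ I → ∀ p, ∃ j, (((f j).symm p).1 : _) ∈ u i := by
    intro i
    by_cases hi : i ∈ I
    · obtain ⟨a, b, ha, hab, hb, hmem⟩ :=
        small_interval (u i) (hu i hi).1 (x₀ i) (hu i hi).2
      obtain ⟨f, hf⟩ := strip_cover ha hab hb
      refine ⟨f, fun _ p => ?_⟩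
      obtain ⟨j, hj1, hj2⟩ := hf p
      exact ⟨j, hmem _ hj1 hj2⟩
    · exact ⟨fun _ => Homeomorph.refl _, fun h => absurd h hi⟩
  choose f hf using hfam
  set N : ℕ := (I.sup id) + 1 with hN
  have hNlt : ∀ i ∈ I, i < N := fun i hi =>
    Nat.lt_succ_of_le (Finset.le_sup (f := id) hi)
  refine ⟨(↥I → Fin 4), inferInstance, fun d =>
    myBig I N hNlt (fun i => if hi : i ∈ I then f i (d ⟨i, hi⟩) else Homeomorph.refl _), ?_⟩
  rw [eq_univ_iff_forall]
  intro x
  rw [mem_iUnion]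
  -- choose for each i ∈ I the right index
  have hsel : ∀ i : ℕ, ∃ j : Fin 4, i ∈ I → (((f i j).symm (x i, x (N + i))).1 : _) ∈ u i := by
    intro i
    by_cases hi : i ∈ I
    · obtain ⟨j, hj⟩ := hf i hi (x i, x (N + i))
      exact ⟨j, fun _ => hj⟩
    · exact ⟨0, fun h => absurd h hi⟩
  choose sel hsel using hsel
  set d : ↥I → Fin 4 := fun i => sel i with hd
  set F : ℕ → ((↥(Set.Icc (0:ℝ) 1) × ↥(Set.Icc (0:ℝ) 1)) ≃ₜ (↥(Set.Icc (0:ℝ) 1) × ↥(Set.Icc (0:ℝ) 1)))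
    := fun i => if hi : i ∈ I then f i (d ⟨i, hi⟩) else Homeomorph.refl _ with hF
  refine ⟨d, (myBig I N hNlt F).symm x, ?_, (myBig I N hNlt F).apply_symm_apply x⟩
  apply hpi
  intro i hi
  have hi' : i ∈ I := hi
  have e1 : (myBig I N hNlt F).symm x i = ((F i).symm (x i, x (N + i))).1 :=
    myBig_symm_apply I N hNlt F x hi'
  have e2 : F i = f i (sel i) := by simp only [hF]; exact dif_pos hi'
  rw [e1, e2]
  exact hsel i hi'


/-- Every minimal dense Gδ-set belongs to every topologically invariant ideal with
BP-base on the Hilbert cube which is not contained in the meager ideal; consequently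
for σ-ideals, `σG₀ ⊆ I`. -/
theorem minimal_dense_Gdelta_in_nonmeager_ideal (I : Set (Set HilbertCube))
    (hI : IsIdeal I) (hinv : TopInvariant I)
    (hbp : HasBaseWith I HasBaireProperty)
    (hnm : ¬ I ⊆ MeagerIdeal HilbertCube) :
    GdeltaFamily ⊆ I ∧ (IsSigmaIdeal I → sigmaG0 ⊆ I) := by
  have part1 : GdeltaFamily ⊆ I := by
    intro A hA
    obtain ⟨C, hCI, hCnm⟩ := not_subset.mp hnm
    obtain ⟨Bse, hBI, hBbase, hBP⟩ := hbp
    obtain ⟨C', hC'B, hCC'⟩ := hBbase C hCI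
    have hC'I : C' ∈ I := hBI hC'B
    obtain ⟨U, hUopen, hUmeag⟩ := hBP C' hC'B
    have hC'nm : ¬ IsMeagre C' := fun h => hCnm (h.mono hCC')
    have hUne : U.Nonempty := by
      rcases eq_empty_or_nonempty U with rfl | hne
      · exact absurd (hUmeag.mono (by intro x hx; exact Or.inl ⟨hx, fun h => h.elim⟩)) hC'nm
      · exact hne
    have hUC' : IsMeagre (U \ C') := hUmeag.mono subset_union_right
    obtain ⟨ι, _, h, hcov⟩ := my_dense_cover U hUopen hUne
    set F : Set HilbertCube := ⋃ i, h i '' C' with hF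
    have hFI : F ∈ I := by
      refine my_ideal_fintype_union hI _ fun i => ?_
      rw [← hinv (h i)]
      exact ⟨C', hC'I, rfl⟩
    have hmeag : IsMeagre Fᶜ := by
      have h1 : IsMeagre (⋃ i, h i '' (U \ C')) := by
        rw [IsMeagre, compl_iUnion]
        exact countable_iInter_mem.mpr fun i => my_meagre_image (h i) hUC'
      refine h1.mono ?_
      intro x hx
      have hxU : x ∈ ⋃ i, h i '' U := hcov ▸ mem_univ x
      obtain ⟨_, ⟨i, rfl⟩, y, hyU, rfl⟩ := hxU
      refine mem_iUnion.mpr ⟨i, ⟨y, ⟨hyU, fun hyC' => ?_⟩, rfl⟩⟩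
      exact hx (mem_iUnion.mpr ⟨i, ⟨y, hyC', rfl⟩⟩)
    have hFres : F ∈ residual HilbertCube := by
      rw [IsMeagre, compl_compl] at hmeag; exact hmeag
    obtain ⟨G, hGF, hGδ, hGd⟩ := mem_residual.mp hFres
    obtain ⟨hAGδ, hAd, hmin⟩ := hA
    obtain ⟨g, hg⟩ := hmin G hGδ hGd
    have hgA : g '' A ∈ I := hI.2.1 F hFI _ (hg.trans hGF)
    rw [← hinv g] at hgA
    obtain ⟨A₀, hA₀, heq⟩ := hgA
    rwa [(Set.image_injective.mpr g.injective) heq]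
  refine ⟨part1, fun hσ A hA => ?_⟩
  obtain ⟨S, hS, hsub⟩ := hA
  exact hσ.1.2.1 _ (hσ.2 S fun n => part1 (hS n)) _ hsub
end

section
/- For any sequence (A_n)_{n∈ℕ} of closed proper subsets A_n ⊊ [0,1], the product ∏_{n∈ℕ} A_n is a Z-set in the Hilbert cube I^ω = [0,1]^ℕ. -/
open Set Topology Cardinal

/-- For any sequence of closed proper subsets `A n ⊊ [0,1]`, the product `∏ A n` is a
Z-set in the Hilbert cube. -/
theorem product_of_proper_closed_is_ZSet (A : ℕ → Set ↥(Set.Icc (0:ℝ) 1))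
    (hA : ∀ n, IsClosed (A n)) (hprop : ∀ n, A n ≠ Set.univ) :
    IsZSet {x : HilbertCube | ∀ n, x n ∈ A n} := by
  constructor
  · have : {x : HilbertCube | ∀ n, x n ∈ A n} = ⋂ n, (fun x : HilbertCube => x n) ⁻¹' A n := by
      ext x; simp
    rw [this]
    exact isClosed_iInter fun n => (hA n).preimage (continuous_apply n)
  · intro U hUopen hUcov
    have hV : ∀ x : HilbertCube, ∃ V ∈ U, x ∈ V := by
      intro x
      have : x ∈ ⋃₀ U := hUcov ▸ Set.mem_univ x
      simpa using this
    choose V hVU hxV using hV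
    have hbasic : ∀ x, ∃ (I : Finset ℕ) (u : ℕ → Set ↥(Set.Icc (0:ℝ) 1)),
        (∀ i ∈ I, IsOpen (u i) ∧ x i ∈ u i) ∧ (I : Set ℕ).pi u ⊆ V x := by
      intro x
      exact isOpen_pi_iff.mp (hUopen _ (hVU x)) x (hxV x)
    choose I u hu hsub using hbasic
    have hcov : (Set.univ : Set HilbertCube) ⊆ ⋃ x : HilbertCube, (I x : Set ℕ).pi (u x) := by
      intro y _
      exact Set.mem_iUnion.mpr ⟨y, fun i hi => (hu y i hi).2⟩
    obtain ⟨t, ht⟩ := isCompact_univ.elim_finite_subcover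
      (fun x : HilbertCube => (I x : Set ℕ).pi (u x))
      (fun x => isOpen_set_pi (I x).finite_toSet (fun i hi => (hu x i hi).1)) hcov
    set N : ℕ := (t.sup fun x => (I x).sup id) + 1 with hN
    have hNnot : ∀ x ∈ t, N ∉ I x := by
      intro x hx hmem
      have h1 : id N ≤ (I x).sup id := Finset.le_sup hmem
      have h2 : (I x).sup id ≤ t.sup fun x => (I x).sup id :=
        Finset.le_sup (f := fun x => (I x).sup id) hx
      simp only [id] at h1
      omega
    obtain ⟨p, hp⟩ : ∃ p, p ∉ A N := by
      by_contra h
      push_neg at h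
      exact hprop N (Set.eq_univ_of_forall h)
    refine ⟨⟨fun x => Function.update x N p, ?_⟩, ?_, ?_⟩
    · refine continuous_pi fun i => ?_
      rcases eq_or_ne i N with rfl | hne
      · simpa using (continuous_const : Continuous fun _ : HilbertCube => p)
      · simp only [Function.update_of_ne hne]
        exact continuous_apply i
    · intro x hx
      have := hx N
      simp only [ContinuousMap.coe_mk, Function.update_self] at this
      exact hp this
    · intro x
      obtain ⟨x₀, hx₀t, hx₀⟩ : ∃ x₀ ∈ t, x ∈ (I x₀ : Set ℕ).pi (u x₀) := by
        have := ht (Set.mem_univ x)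
        simpa using this
      refine ⟨V x₀, hVU x₀, hsub x₀ hx₀, hsub x₀ ?_⟩
      intro i hi
      have hne : i ≠ N := fun h => hNnot x₀ hx₀t (by rw [← h]; exact hi)
      simp only [ContinuousMap.coe_mk, Function.update_of_ne hne]
      exact hx₀ i hi
end
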